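/- arXiv:1610.07253 — 10 statements merged into one kernel-verified Lean document; each statement's English description precedes it below -/
import Mathlib

section
/- Let [H,G] be a boolean interval of finite groups whose dual Euler totient φ̂(H,G) = ∑_{K ∈ [H,G]} (-1)^{ℓ(H,K)} |G:K| is nonzero, where ℓ(H,K) is the rank of the boolean interval [H,K]. Then [H,G] is linearly primitive. -/
/-- `K` is a minimal overgroup of `H` (an atom of the interval `[H,G]`):
`H < K` and nothing lies strictly between `H` and `K`. -/
def IsMinimalOvergroup {G : Type*} [Group G] (H K : Subgroup G) : Prop :=
  H < K ∧ ∀ K' : Subgroup G, H < K' → K' ≤ K → K' = K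

/-- The interval `[H,G]` is linearly primitive: there is a finite-dimensional
irreducible complex representation `V` of `G` such that the pointwise stabilizer
of the fixed-point subspace `V^H` is exactly `H`. -/
def IsLinearlyPrimitive {G : Type*} [Group G] (H : Subgroup G) : Prop :=
  ∃ (V : Type) (_ : AddCommGroup V) (_ : Module ℂ V) (ρ : Representation ℂ G V),
    FiniteDimensional ℂ V ∧ Nontrivial V ∧
    (∀ U : Submodule ℂ V, (∀ g : G, ∀ v ∈ U, ρ g v ∈ U) → U = ⊥ ∨ U = ⊤) ∧
    {g : G | ∀ v : V, (∀ h : G, h ∈ H → ρ h v = v) → ρ g v = v} = (H : Set G)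

/-- The interval `[H,G]` is boolean: order-isomorphic to the lattice of subsets of
a finite set. -/
def IsBooleanInterval {G : Type*} [Group G] (H : Subgroup G) : Prop :=
  ∃ n : ℕ, Nonempty ((Set.Icc H (⊤ : Subgroup G)) ≃o Set (Fin n))

/-- The dual Euler totient of a boolean interval `[H,G]`, computed via an order
isomorphism `e` with the boolean lattice of subsets of `Fin n`:
`φ̂(H,G) = ∑_{K ∈ [H,G]} (-1)^{ℓ(H,K)} |G:K|`, where the rank `ℓ(H,K)` of the
boolean interval `[H,K]` is the cardinality of `e K`. -/
noncomputable def dualEulerTotient {G : Type*} [Group G] (H : Subgroup G) {n : ℕ}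
    (e : (Set.Icc H (⊤ : Subgroup G)) ≃o Set (Fin n)) : ℤ :=
  ∑ᶠ K : (Set.Icc H (⊤ : Subgroup G)),
    (-1 : ℤ) ^ ((e K).ncard) * ((K : Subgroup G).index : ℤ)

/-!
Let `V = ℂ^G` be the regular representation and `K_T` (`T ⊆ {1,…,n}`) the subgroup of `[H,G]`
corresponding to `T` under `e`. For a subrepresentation `W` put
`χ(W) = ∑_T (-1)^|T| dim (W ∩ V^{K_T})`. Since `dim V^K = |G:K|`, `χ(V) = φ̂(H,G) ≠ 0`.
Fixed points of a direct sum of subrepresentations split, so by Maschke `χ` is additive and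
some irreducible `W` has `χ(W) ≠ 0`. If an atom `K_i` fixed `W^H` pointwise, then
`W^{K_{T ∪ {i}}} = W^{K_T}` for all `T` and the terms of `χ(W)` would cancel in pairs. So no
atom fixes `W^H`; as every subgroup strictly above `H` in the boolean interval contains an
atom, the pointwise stabilizer of `W^H` is `H`.
-/

open Module

theorem exists_isAtom_le_map_ne_zero {L M : Type*} [Lattice L] [BoundedOrder L]
    [IsModularLattice L] [ComplementedLattice L] [WellFoundedLT L] [AddCancelCommMonoid M]
    (f : L → M) (hf : ∀ x y, Disjoint x y → f (x ⊔ y) = f x + f y) {x : L}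
    (hx : f x ≠ 0) :
    ∃ a, IsAtom a ∧ a ≤ x ∧ f a ≠ 0 := by
  have hbot : f ⊥ = 0 := by simpa using hf ⊥ ⊥ disjoint_bot_left
  induction x using WellFoundedLT.induction with
  | ind x ih =>
  by_cases hatom : IsAtom x
  · exact ⟨x, hatom, le_rfl, hx⟩
  have hx_ne : x ≠ ⊥ := by rintro rfl; exact hx hbot
  obtain ⟨y, hyx, hy⟩ : ∃ y < x, y ≠ ⊥ := by simpa [IsAtom, hx_ne] using hatom
  obtain ⟨z, hzx, hyz, hyzx⟩ := Set.Iic.complementedLattice_iff.mp inferInstance y hyx.le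
  have hzx' : z < x := by
    refine hzx.lt_of_ne fun hz => hy ?_
    rwa [hz, inf_eq_left.mpr hyx.le] at hyz
  have hsum : f x = f y + f z := by rw [← hyzx, hf y z (disjoint_iff.mpr hyz)]
  by_cases hfy : f y = 0
  · obtain ⟨a, ha, haz, hfa⟩ := ih z hzx' (by rwa [hsum, hfy, zero_add] at hx)
    exact ⟨a, ha, haz.trans hzx, hfa⟩
  · obtain ⟨a, ha, hay, hfa⟩ := ih y hyx hfy
    exact ⟨a, ha, hay.trans hyx.le, hfa⟩

theorem finsum_neg_one_pow_ncard_mul_eq_zero {ι R : Type*} [Finite ι] [CommRing R]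
    {f : Set ι → R} (i : ι) (hf : ∀ T, f (insert i T) = f T) :
    ∑ᶠ T : Set ι, (-1) ^ T.ncard * f T = 0 := by
  classical
  have := Fintype.ofFinite (Set ι)
  have hpair : ∀ T, i ∉ T →
      (-1) ^ T.ncard * f T + (-1) ^ (insert i T).ncard * f (insert i T) = 0 := by
    intro T hi
    rw [Set.ncard_insert_of_notMem hi, hf, pow_succ]
    ring
  rw [finsum_eq_sum_of_fintype]
  refine Finset.sum_involution (fun T _ => symmDiff T {i}) (fun T _ => ?_) (fun T _ _ h => ?_)
    (fun _ _ => Finset.mem_univ _) (fun T _ => symmDiff_symmDiff_cancel_right _ _)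
  · by_cases hi : i ∈ T
    · have hT : symmDiff T {i} = T \ {i} := by ext; grind
      rw [hT, add_comm]
      simpa [hi] using hpair (T \ {i}) (by simp)
    · have hT : symmDiff T {i} = insert i T := by ext; grind
      rw [hT]
      exact hpair T hi
  · exact Set.singleton_ne_empty i (symmDiff_eq_left.mp h)

namespace Set.Icc

variable {α ι : Type*} {a b : α}

theorem coe_orderIso_symm_union [Lattice α] (e : Set.Icc a b ≃o Set ι) (S T : Set ι) :
    (e.symm (S ∪ T) : α) = (e.symm S : α) ⊔ (e.symm T : α) := by
  rw [← Set.Icc.coe_sup, ← e.symm.map_sup]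
  rfl

theorem coe_orderIso_symm_empty [PartialOrder α] (hab : a ≤ b) (e : Set.Icc a b ≃o Set ι) :
    (e.symm ∅ : α) = a :=
  le_antisymm (e.symm_apply_le.mpr (Set.empty_subset (e ⟨a, le_rfl, hab⟩))) (e.symm ∅).2.1

theorem exists_coe_orderIso_symm_singleton_le [PartialOrder α] (e : Set.Icc a b ≃o Set ι)
    {x : α} (hax : a < x) (hxb : x ≤ b) : ∃ i, (e.symm {i} : α) ≤ x := by
  obtain ⟨i, hi⟩ : (e ⟨x, hax.le, hxb⟩).Nonempty := by
    refine Set.nonempty_iff_ne_empty.mpr fun h => hax.ne ?_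
    rw [← coe_orderIso_symm_empty (hax.le.trans hxb) e, e.symm_apply_eq.mpr h.symm]
  exact ⟨i, e.symm_apply_le.mpr (Set.singleton_subset_iff.mpr hi)⟩

end Set.Icc

namespace Representation

variable {k G V : Type*} [CommRing k] [Group G] [AddCommGroup V] [Module k V]
  (ρ : Representation k G V)

def fixedSubspace (K : Subgroup G) : Submodule k V where
  carrier := {v | ∀ g ∈ K, ρ g v = v}
  add_mem' hv hw g hg := by simp [hv g hg, hw g hg]
  zero_mem' := by simp
  smul_mem' c v hv g hg := by simp [hv g hg]

def fixingSubgroup (U : Submodule k V) : Subgroup G where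
  carrier := {g | ∀ v ∈ U, ρ g v = v}
  mul_mem' ha hb v hv := by simp [hb v hv, ha v hv]
  one_mem' := by simp
  inv_mem' {g} hg v hv := by
    conv_lhs => rw [← hg v hv]
    simp [← Module.End.mul_apply, ← map_mul]

theorem gc_fixedSubspace_fixingSubgroup :
    GaloisConnection (OrderDual.toDual ∘ ρ.fixedSubspace)
      (ρ.fixingSubgroup ∘ OrderDual.ofDual) :=
  fun _ _ => ⟨fun h _ hg _ hv => h hv _ hg, fun h _ hv _ hg => h hg _ hv⟩

theorem fixedSubspace_sup (K L : Subgroup G) :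
    ρ.fixedSubspace (K ⊔ L) = ρ.fixedSubspace K ⊓ ρ.fixedSubspace L :=
  (gc_fixedSubspace_fixingSubgroup ρ).l_sup

theorem fixedSubspace_antitone : Antitone ρ.fixedSubspace :=
  (gc_fixedSubspace_fixingSubgroup ρ).monotone_l

variable {ρ} in
theorem fixingSubgroup_eq_of_forall_not_le {ι : Type*} {H : Subgroup G} {U : Submodule k V}
    (hU : U ≤ ρ.fixedSubspace H) (A : ι → Subgroup G) (hA : ∀ P, H < P → ∃ i, A i ≤ P)
    (hUA : ∀ i, ¬ U ≤ ρ.fixedSubspace (A i)) : ρ.fixingSubgroup U = H := by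
  have hHU : H ≤ ρ.fixingSubgroup U := (gc_fixedSubspace_fixingSubgroup ρ).le_iff_le.mp hU
  refine (eq_of_le_of_not_lt hHU fun hlt => ?_).symm
  obtain ⟨i, hi⟩ := hA _ hlt
  exact hUA i ((gc_fixedSubspace_fixingSubgroup ρ).le_iff_le.mpr hi)

variable (k G) in
def rightRegular : Representation k G (G → k) where
  toFun g := LinearMap.funLeft k k (· * g)
  map_one' := by ext; simp [LinearMap.funLeft]
  map_mul' g h := by ext; simp [LinearMap.funLeft, mul_assoc]

end Representation

namespace Subrepresentation

variable {k G V : Type*} [CommRing k] [Group G] [AddCommGroup V] [Module k V]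
  {ρ : Representation k G V}

theorem disjoint_toSubmodule {W₁ W₂ : Subrepresentation ρ} :
    Disjoint W₁.toSubmodule W₂.toSubmodule ↔ Disjoint W₁ W₂ := by
  simp only [disjoint_iff]
  exact (toSubmodule_injective (ρ := ρ)).eq_iff (a := W₁ ⊓ W₂) (b := ⊥)

instance : IsModularLattice (Subrepresentation ρ) :=
  ⟨fun {_} y {_} hxz => (sup_inf_assoc_of_le y.toSubmodule hxz).le⟩

theorem inf_fixedSubspace_sup {W₁ W₂ : Subrepresentation ρ} (h : Disjoint W₁ W₂)
    (K : Subgroup G) :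
    (W₁ ⊔ W₂).toSubmodule ⊓ ρ.fixedSubspace K =
      W₁.toSubmodule ⊓ ρ.fixedSubspace K ⊔ W₂.toSubmodule ⊓ ρ.fixedSubspace K := by
  have hdisj : W₁.toSubmodule ⊓ W₂.toSubmodule = ⊥ := (disjoint_toSubmodule.mpr h).eq_bot
  refine le_antisymm ?_ (sup_le (inf_le_inf_right _ le_sup_left) (inf_le_inf_right _ le_sup_right))
  rintro v ⟨hv, hvK⟩
  obtain ⟨w₁, hw₁, w₂, hw₂, rfl⟩ := Submodule.mem_sup.mp hv
  have hfix : ∀ g ∈ K, ρ g w₁ = w₁ ∧ ρ g w₂ = w₂ := by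
    intro g hg
    have hmem : ρ g w₁ - w₁ ∈ W₁.toSubmodule ⊓ W₂.toSubmodule := by
      refine ⟨sub_mem (W₁.apply_mem_toSubmodule g hw₁) hw₁, ?_⟩
      rw [show ρ g w₁ - w₁ = w₂ - ρ g w₂ by
        rw [sub_eq_sub_iff_add_eq_add, ← map_add, hvK g hg, add_comm]]
      exact sub_mem hw₂ (W₂.apply_mem_toSubmodule g hw₂)
    rw [hdisj, Submodule.mem_bot, sub_eq_zero] at hmem
    have hsum := hvK g hg
    rw [map_add, hmem] at hsum
    exact ⟨hmem, add_left_cancel hsum⟩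
  exact Submodule.add_mem_sup ⟨hw₁, fun g hg => (hfix g hg).1⟩
    ⟨hw₂, fun g hg => (hfix g hg).2⟩

theorem fixingSubgroup_fixedSubspace_toRepresentation (W : Subrepresentation ρ)
    (H : Subgroup G) :
    W.toRepresentation.fixingSubgroup (W.toRepresentation.fixedSubspace H) =
      ρ.fixingSubgroup (W.toSubmodule ⊓ ρ.fixedSubspace H) := by
  ext g
  simp [Representation.fixingSubgroup, Representation.fixedSubspace, Subtype.ext_iff,
    toRepresentation]

variable {k : Type*} [Field k] [Module k V] {ρ : Representation k G V}

instance [FiniteDimensional k V] : WellFoundedLT (Subrepresentation ρ) :=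
  StrictMono.wellFoundedLT (f := toSubmodule) fun _ _ h => h

theorem isIrreducible_toRepresentation {W : Subrepresentation ρ} (hW : IsAtom W) :
    W.toRepresentation.IsIrreducible := by
  have hinj := Submodule.map_injective_of_injective W.toSubmodule.injective_subtype
  refine { exists_pair_ne := ⟨⊥, ⊤, fun h => hW.1 (toSubmodule_injective ?_)⟩,
           eq_bot_or_eq_top := fun U => ?_ }
  · have htop : (⊤ : Submodule k W.toSubmodule) = ⊥ := (congrArg toSubmodule h).symm
    refine (Submodule.eq_bot_iff _).mpr fun w hw => ?_
    exact congrArg Subtype.val ((Submodule.eq_bot_iff _).mp htop ⟨w, hw⟩ Submodule.mem_top)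
  · let U' : Subrepresentation ρ := ⟨U.toSubmodule.map W.toSubmodule.subtype, by
      rintro g _ ⟨u, hu, rfl⟩
      exact ⟨_, U.apply_mem_toSubmodule g hu, rfl⟩⟩
    rcases hW.le_iff.mp (show U' ≤ W from Submodule.map_subtype_le _ _) with h | h
    · exact .inl <| toSubmodule_injective <|
        hinj ((congrArg toSubmodule h).trans (Submodule.map_bot _).symm)
    · exact .inr <| toSubmodule_injective <|
        hinj ((congrArg toSubmodule h).trans (Submodule.map_subtype_top _).symm)

end Subrepresentation

namespace Representation

variable {k G V ι : Type*} [Field k] [Group G] [AddCommGroup V] [Module k V]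
  (ρ : Representation k G V)

theorem finrank_fixedSubspace_rightRegular [Finite G] (K : Subgroup G) :
    finrank k ((rightRegular k G).fixedSubspace K) = K.index := by
  have := Fintype.ofFinite (G ⧸ K)
  have hrange : LinearMap.range (LinearMap.funLeft k k (QuotientGroup.mk : G → G ⧸ K)) =
      (rightRegular k G).fixedSubspace K := by
    refine le_antisymm ?_ fun f hf => ?_
    · rintro _ ⟨φ, rfl⟩ g hg
      ext x
      simp [rightRegular, LinearMap.funLeft, QuotientGroup.mk_mul_of_mem x hg]
    · refine ⟨Quotient.lift f fun a b hab => ?_, rfl⟩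
      have := congr_fun (hf _ (QuotientGroup.leftRel_apply.mp hab)) a
      simpa [rightRegular, LinearMap.funLeft] using this.symm
  rw [← hrange, LinearMap.finrank_range_of_inj
    (LinearMap.funLeft_injective_of_surjective k k _ QuotientGroup.mk_surjective),
    Module.finrank_fintype_fun_eq_card, Subgroup.index, Nat.card_eq_fintype_card]

noncomputable def alternatingFixedRank (K : Set ι → Subgroup G) (W : Submodule k V) : ℤ :=
  ∑ᶠ T : Set ι, (-1) ^ T.ncard * (finrank k ↥(W ⊓ ρ.fixedSubspace (K T)) : ℤ)

variable {ρ}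

theorem alternatingFixedRank_sup [Finite ι] [FiniteDimensional k V] (K : Set ι → Subgroup G)
    {W₁ W₂ : Subrepresentation ρ} (h : Disjoint W₁ W₂) :
    ρ.alternatingFixedRank K (W₁ ⊔ W₂).toSubmodule =
      ρ.alternatingFixedRank K W₁.toSubmodule + ρ.alternatingFixedRank K W₂.toSubmodule := by
  rw [alternatingFixedRank, alternatingFixedRank, alternatingFixedRank,
    ← finsum_add_distrib (Set.toFinite _) (Set.toFinite _)]
  refine finsum_congr fun T => ?_
  have hdisj : Disjoint (W₁.toSubmodule ⊓ ρ.fixedSubspace (K T))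
      (W₂.toSubmodule ⊓ ρ.fixedSubspace (K T)) :=
    (Subrepresentation.disjoint_toSubmodule.mpr h).mono inf_le_left inf_le_left
  rw [Subrepresentation.inf_fixedSubspace_sup h, ← mul_add, ← Nat.cast_add,
    ← Submodule.finrank_sup_add_finrank_inf_eq, hdisj.eq_bot, finrank_bot, add_zero]

theorem alternatingFixedRank_eq_zero [Finite ι] {K : Set ι → Subgroup G}
    (hK : ∀ S T, K (S ∪ T) = K S ⊔ K T) {W : Submodule k V} (i : ι)
    (hi : W ⊓ ρ.fixedSubspace (K ∅) ≤ ρ.fixedSubspace (K {i})) :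
    ρ.alternatingFixedRank K W = 0 := by
  refine finsum_neg_one_pow_ncard_mul_eq_zero i fun T => ?_
  have hT : W ⊓ ρ.fixedSubspace (K T) ≤ ρ.fixedSubspace (K {i}) :=
    le_trans (inf_le_inf_left W (ρ.fixedSubspace_antitone (by simpa using (hK ∅ T).ge))) hi
  rw [Set.insert_eq, hK, fixedSubspace_sup, inf_comm (ρ.fixedSubspace _), ← inf_assoc,
    inf_eq_left.mpr hT]

theorem alternatingFixedRank_rightRegular_top {G : Type*} [Group G] [Finite G] (H : Subgroup G)
    {n : ℕ} (e : Set.Icc H ⊤ ≃o Set (Fin n)) :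
    (rightRegular ℂ G).alternatingFixedRank (fun T => e.symm T) ⊤ = dualEulerTotient H e := by
  rw [alternatingFixedRank, dualEulerTotient, ← finsum_comp_equiv e.toEquiv]
  refine finsum_congr fun K => ?_
  rw [RelIso.coe_fn_toEquiv, e.symm_apply_apply, top_inf_eq,
    finrank_fixedSubspace_rightRegular]

end Representation

theorem isLinearlyPrimitive_of_isIrreducible {G V : Type*} [Group G] [AddCommGroup V]
    [Module ℂ V] [FiniteDimensional ℂ V] (ρ : Representation ℂ G V) [ρ.IsIrreducible]
    {H : Subgroup G} (hH : ρ.fixingSubgroup (ρ.fixedSubspace H) = H) :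
    IsLinearlyPrimitive H := by
  -- `IsLinearlyPrimitive` asks for a representation on a space in `Type`, hence the transport.
  let E := (Module.finBasis ℂ V).equivFun
  let ρ' : Representation ℂ G (Fin (finrank ℂ V) → ℂ) :=
    E.conjRingEquiv.toMonoidHom.comp ρ
  have hρ' : ∀ g v, ρ' g (E v) = E (ρ g v) := fun g v => by simp [ρ']
  have : Nontrivial V := by
    by_contra hV
    rw [not_nontrivial_iff_subsingleton] at hV
    exact (bot_ne_top : (⊥ : Subrepresentation ρ) ≠ ⊤)
      (Subrepresentation.toSubmodule_injective (Subsingleton.elim _ _))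
  refine ⟨_, inferInstance, inferInstance, ρ', inferInstance, E.injective.nontrivial,
    fun U hU => ?_, ?_⟩
  · let U₀ : Subrepresentation ρ := ⟨U.comap E.toLinearMap, fun g v hv => by
      simpa [← hρ'] using hU g _ hv⟩
    have hU₀ : U = U₀.toSubmodule.map E.toLinearMap :=
      (Submodule.map_comap_eq_of_surjective E.surjective U).symm
    rcases eq_bot_or_eq_top U₀ with h | h
    · exact .inl (by rw [hU₀, h]; exact Submodule.map_bot _)
    · exact .inr (by
        rw [hU₀, h]
        exact (Submodule.map_top _).trans (LinearMap.range_eq_top.mpr E.surjective))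
  · ext g
    conv_rhs => rw [← hH]
    refine E.toEquiv.forall_congr_right.symm.trans ?_
    simp [hρ', Representation.fixingSubgroup, Representation.fixedSubspace]

/-- A boolean interval `[H,G]` with nonzero dual Euler totient is linearly primitive. -/
theorem boolean_nonzero_dual_euler_totient_linearly_primitive {G : Type*} [Group G]
    [Finite G] (H : Subgroup G) (n : ℕ)
    (e : (Set.Icc H (⊤ : Subgroup G)) ≃o Set (Fin n))
    (h : dualEulerTotient H e ≠ 0) :
    IsLinearlyPrimitive H := by
  set ρ := Representation.rightRegular ℂ G
  set K : Set (Fin n) → Subgroup G := fun T => e.symm T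
  have hK_empty : K ∅ = H := Set.Icc.coe_orderIso_symm_empty le_top e
  obtain ⟨W, hW, -, hW_ne⟩ := exists_isAtom_le_map_ne_zero
    (fun W : Subrepresentation ρ => ρ.alternatingFixedRank K W.toSubmodule)
    (fun _ _ => Representation.alternatingFixedRank_sup K) (x := ⊤)
    (by rwa [← Representation.alternatingFixedRank_rightRegular_top] at h)
  have := Subrepresentation.isIrreducible_toRepresentation hW
  refine isLinearlyPrimitive_of_isIrreducible W.toRepresentation ?_
  rw [Subrepresentation.fixingSubgroup_fixedSubspace_toRepresentation]
  refine Representation.fixingSubgroup_eq_of_forall_not_le inf_le_right (fun i => K {i})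
    (fun P hP => Set.Icc.exists_coe_orderIso_symm_singleton_le e hP le_top) fun i hi => hW_ne ?_
  exact Representation.alternatingFixedRank_eq_zero (Set.Icc.coe_orderIso_symm_union e) i
    (hK_empty ▸ hi)
end

section
/- Let G be a finite group and H a proper subgroup, and let K_1, ..., K_n be the minimal overgroups of H. If ∑_{i=1}^n 1/|K_i : H| ≤ 1, then [H,G] is linearly primitive. (No distributivity assumption on [H,G] is needed.) -/
/-!
Suppose `[H,G]` is not linearly primitive. For every irreducible representation `V` of `G` the
pointwise stabilizer of `V^H` then properly contains `H`, hence contains a minimal overgroup `K`,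
and `V^H ⊆ V^K`. Averaging over `H` in a decomposition of the regular representation `ℂ[G]` into
irreducibles gives `ℂ[G]^H ⊆ ∑ᵢ ℂ[G]^{Kᵢ}`. These spaces have dimensions `|G:H|` and
`|G:Kᵢ| = |G:H| / |Kᵢ:H|` and all contain the constants, so
`|G:H| ≤ 1 + ∑ᵢ (|G:Kᵢ| - 1) ≤ 1 + |G:H| - n`. Hence `n = 1`, and then
`|G:H| ≤ |G:K₁| < |G:H|`.
-/

open MonoidAlgebra Module

open Finset in
theorem Submodule.finrank_biSup_add_card_mul_le {K V ι : Type*} [DivisionRing K] [AddCommGroup V]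
    [Module K V] [FiniteDimensional K V] (s : Finset ι) (U : ι → Submodule K V)
    {L : Submodule K V} (hL : ∀ i ∈ s, L ≤ U i) :
    finrank K ↥(⨆ i ∈ s, U i) + #s * finrank K L ≤
      ∑ i ∈ s, finrank K (U i) + finrank K L := by
  classical
  suffices h : finrank K ↥(L ⊔ ⨆ i ∈ s, U i) + #s * finrank K L ≤
      ∑ i ∈ s, finrank K (U i) + finrank K L from
    (Nat.add_le_add_right (Submodule.finrank_mono le_sup_right) _).trans h
  induction s using Finset.induction with
  | empty =>
    rw [show (⨆ i ∈ (∅ : Finset ι), U i) = ⊥ by simp, sup_bot_eq, card_empty, sum_empty]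
    omega
  | insert a s ha ih =>
    have hsup : L ⊔ ⨆ i ∈ insert a s, U i = U a ⊔ (L ⊔ ⨆ i ∈ s, U i) := by
      rw [Finset.iSup_insert, sup_left_comm]
    have hinf : finrank K L ≤ finrank K ↥(U a ⊓ (L ⊔ ⨆ i ∈ s, U i)) :=
      Submodule.finrank_mono (le_inf (hL a (mem_insert_self a s)) le_sup_left)
    have hmod := Submodule.finrank_sup_add_finrank_inf_eq (U a) (L ⊔ ⨆ i ∈ s, U i)
    have ih := ih fun i hi => hL i (mem_insert_of_mem hi)
    rw [hsup, card_insert_of_notMem ha, sum_insert ha, add_mul, one_mul]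
    linarith

theorem Subgroup.sum_index_le_index {G : Type*} [Group G] {H : Subgroup G} [H.FiniteIndex]
    (S : Finset (Subgroup G)) (hS : ∀ K ∈ S, H ≤ K)
    (hsum : ∑ K ∈ S, (1 : ℚ) / H.relIndex K ≤ 1) :
    ∑ K ∈ S, K.index ≤ H.index := by
  have hK (K) (hK : K ∈ S) : (K.index : ℚ) = H.index * (1 / H.relIndex K) := by
    have : (H.relIndex K : ℚ) ≠ 0 := Nat.cast_ne_zero.mpr <|
      left_ne_zero_of_mul (relIndex_mul_index (hS K hK) ▸ FiniteIndex.index_ne_zero)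
    rw [← relIndex_mul_index (hS K hK), Nat.cast_mul]
    field_simp
  have : (∑ K ∈ S, K.index : ℚ) ≤ H.index := calc
    (∑ K ∈ S, K.index : ℚ) = H.index * ∑ K ∈ S, (1 : ℚ) / H.relIndex K := by
      rw [Finset.mul_sum]; exact Finset.sum_congr rfl hK
    _ ≤ H.index * 1 := by gcongr
    _ = H.index := mul_one _
  exact_mod_cast this

lemma exists_isMinimalOvergroup_le {G : Type*} [Group G] [Finite G] {H L : Subgroup G}
    (h : H < L) :
    ∃ K, IsMinimalOvergroup H K ∧ K ≤ L := by
  obtain ⟨K, hHK, hKL⟩ := exists_covBy_le_of_lt h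
  exact ⟨K, ⟨hHK.lt, fun K' hHK' hK'K =>
    by_contra fun hne => hHK.2 hHK' (lt_of_le_of_ne hK'K hne)⟩, hKL⟩

section FixedPoints

variable {k G M : Type*} [CommSemiring k] [Group G] [AddCommMonoid M] [Module k M]
  [Module k[G] M] [IsScalarTower k k[G] M]

variable (k M) in
def Subgroup.fixedSubmodule (K : Subgroup G) : Submodule k M where
  carrier := {m | ∀ g ∈ K, of k G g • m = m}
  add_mem' ha hb g hg := by rw [smul_add, ha g hg, hb g hg]
  zero_mem' _ _ := smul_zero _
  smul_mem' c m hm g hg := by rw [smul_comm, hm g hg]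

lemma Subgroup.mem_fixedSubmodule {K : Subgroup G} {m : M} :
    m ∈ K.fixedSubmodule k M ↔ ∀ g ∈ K, of k G g • m = m := Iff.rfl

lemma Subgroup.fixedSubmodule_antitone : Antitone (Subgroup.fixedSubmodule (G := G) k M) :=
  fun _ _ hKL _ hm g hg => hm g (hKL hg)

variable (k) in
def Submodule.pointwiseStabilizer (W : Submodule k M) : Subgroup G where
  carrier := {g | ∀ m ∈ W, of k G g • m = m}
  one_mem' m _ := by rw [map_one, one_smul]
  mul_mem' ha hb m hm := by rw [map_mul, mul_smul, hb m hm, ha m hm]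
  inv_mem' {g} hg m hm := by
    calc of k G g⁻¹ • m = of k G g⁻¹ • of k G g • m := by rw [hg m hm]
      _ = m := by rw [← mul_smul, ← map_mul, inv_mul_cancel, map_one, one_smul]

lemma Submodule.le_pointwiseStabilizer_iff {K : Subgroup G} {W : Submodule k M} :
    K ≤ W.pointwiseStabilizer k ↔ W ≤ K.fixedSubmodule k M :=
  ⟨fun h _ hm _ hg => h hg _ hm, fun h _ hg _ hm => h hm _ hg⟩

end FixedPoints

section Averaging

variable {k G M : Type*} [CommRing k] [Group G] [AddCommGroup M] [Module k M]
  [Module k[G] M] [IsScalarTower k k[G] M]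

lemma Subgroup.mem_fixedSubmodule_iff_mem_invariants {H : Subgroup G} {m : M} :
    m ∈ H.fixedSubmodule k M ↔
      m ∈ Representation.invariants
        ((Representation.ofModule' (k := k) (G := G) M).comp H.subtype) := by
  simp [Subgroup.mem_fixedSubmodule, Representation.mem_invariants, Representation.ofModule']

theorem Subgroup.fixedSubmodule_le_of_forall_isSimpleModule [IsSemisimpleModule k[G] M]
    (H : Subgroup G) [Fintype H] [Invertible (Fintype.card H : k)] {T : Submodule k M}
    (hT : ∀ p : Submodule k[G] M, IsSimpleModule k[G] p →
      H.fixedSubmodule k M ⊓ p.restrictScalars k ≤ T) :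
    H.fixedSubmodule k M ≤ T := by
  let π := Representation.averageMap
    ((Representation.ofModule' (k := k) (G := G) M).comp H.subtype)
  have hπ_fixed (m : M) : π m ∈ H.fixedSubmodule k M :=
    Subgroup.mem_fixedSubmodule_iff_mem_invariants.mpr (Representation.averageMap_invariant _ m)
  have hπ_mem {p : Submodule k[G] M} {m : M} (hm : m ∈ p) : π m ∈ p := by
    simp only [π, Representation.averageMap, Representation.ofModule', GroupAlgebra.average,
      of_apply, map_smul, map_sum, Representation.asAlgebraHom_single,
      MonoidHom.coe_comp, coe_subtype, Function.comp_apply, lift_symm_apply, one_smul,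
      LinearMap.smul_apply, LinearMap.coe_sum, Algebra.lsmul_coe, Finset.sum_apply]
    exact (p.restrictScalars k).smul_mem _
      ((p.restrictScalars k).sum_mem fun h _ => p.smul_mem _ hm)
  intro m hm
  rw [← Representation.averageMap_id _ m (Subgroup.mem_fixedSubmodule_iff_mem_invariants.mp hm)]
  have hm_top :
      m ∈ ⨆ p : {p : Submodule k[G] M | IsSimpleModule k[G] p}, (p : Submodule k[G] M) := by
    rw [← sSup_eq_iSup', IsSemisimpleModule.sSup_simples_eq_top]; trivial
  refine Submodule.iSup_induction _ (motive := fun x => π x ∈ T) hm_top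
    (fun p x hx => hT p.1 p.2 ⟨hπ_fixed x, hπ_mem hx⟩) ?_ fun x y hx hy => ?_
  · rw [map_zero]; exact T.zero_mem
  · rw [map_add]; exact T.add_mem hx hy

end Averaging

section RegularModule

variable {k G : Type*} [Field k] [Group G] [Finite G]

noncomputable def Subgroup.rightCosetFunToMonoidAlgebra (K : Subgroup G) :
    (Quotient (QuotientGroup.rightRel K) → k) →ₗ[k] k[G] :=
  (coeffLinearEquiv k).symm.toLinearMap ∘ₗ
    (Finsupp.linearEquivFunOnFinite k k G).symm.toLinearMap ∘ₗ
    LinearMap.funLeft k k (Quotient.mk _)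

lemma Subgroup.coeff_rightCosetFunToMonoidAlgebra (K : Subgroup G)
    (w : Quotient (QuotientGroup.rightRel K) → k) (g : G) :
    (K.rightCosetFunToMonoidAlgebra w).coeff g = w ⟦g⟧ := by
  simp [Subgroup.rightCosetFunToMonoidAlgebra]

lemma Subgroup.rightCosetFunToMonoidAlgebra_injective (K : Subgroup G) :
    Function.Injective (K.rightCosetFunToMonoidAlgebra (k := k)) :=
  (coeffLinearEquiv k).symm.injective.comp <|
    (Finsupp.linearEquivFunOnFinite k k G).symm.injective.comp <|
    LinearMap.funLeft_injective_of_surjective _ _ _ Quotient.mk_surjective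

lemma Subgroup.range_rightCosetFunToMonoidAlgebra (K : Subgroup G) :
    LinearMap.range (K.rightCosetFunToMonoidAlgebra (k := k)) = K.fixedSubmodule k k[G] := by
  ext v
  constructor
  · rintro ⟨w, rfl⟩ g hg
    ext x
    rw [of_apply, smul_eq_mul, coeff_single_mul_apply, one_mul,
      coeff_rightCosetFunToMonoidAlgebra, coeff_rightCosetFunToMonoidAlgebra]
    exact congrArg w (Quotient.sound (QuotientGroup.rightRel_apply.mpr (by simpa using hg)))
  · intro hv
    refine ⟨Quotient.lift v.coeff fun a b hab => ?_, ?_⟩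
    · have := congrArg (coeff · b) (hv _ (QuotientGroup.rightRel_apply.mp hab))
      simpa [coeff_single_mul_apply, mul_assoc] using this
    · ext g
      rw [coeff_rightCosetFunToMonoidAlgebra]
      rfl

theorem Subgroup.finrank_fixedSubmodule_monoidAlgebra (K : Subgroup G) :
    finrank k (K.fixedSubmodule k k[G]) = K.index := by
  have := Fintype.ofFinite (Quotient (QuotientGroup.rightRel K))
  rw [← K.range_rightCosetFunToMonoidAlgebra,
    LinearMap.finrank_range_of_inj K.rightCosetFunToMonoidAlgebra_injective,
    finrank_fintype_fun_eq_card, Subgroup.index, ← Nat.card_eq_fintype_card,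
    Nat.card_congr (QuotientGroup.quotientRightRelEquivQuotientLeftRel K)]

end RegularModule

section LinearlyPrimitive

variable {G : Type*} [Group G]

lemma Submodule.smul_mem_of_forall_of_smul_mem {k M : Type*} [CommSemiring k] [AddCommMonoid M]
    [Module k M] [Module k[G] M] [IsScalarTower k k[G] M] {U : Submodule k M}
    (hU : ∀ g : G, ∀ m ∈ U, of k G g • m ∈ U) (a : k[G]) {m : M} (hm : m ∈ U) :
    a • m ∈ U := by
  induction a using MonoidAlgebra.induction_linear with
  | zero => rw [zero_smul]; exact U.zero_mem
  | add x y hx hy => rw [add_smul]; exact U.add_mem hx hy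
  | single g r =>
    rw [← mul_one r, ← smul_single', smul_assoc]
    exact U.smul_mem r (hU g m hm)

lemma Submodule.eq_bot_or_eq_top_of_forall_of_smul_mem {k M : Type*} [CommRing k] [AddCommGroup M]
    [Module k M] [Module k[G] M] [IsScalarTower k k[G] M] [IsSimpleModule k[G] M]
    {U : Submodule k M} (hU : ∀ g : G, ∀ m ∈ U, of k G g • m ∈ U) :
    U = ⊥ ∨ U = ⊤ := by
  let U' : Submodule k[G] M :=
    { U.toAddSubmonoid with smul_mem' := fun a _ hm => smul_mem_of_forall_of_smul_mem hU a hm }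
  have hU' : U'.restrictScalars k = U := rfl
  rcases eq_bot_or_eq_top U' with h | h
  · left; rw [← hU', h, Submodule.restrictScalars_bot]
  · right; rw [← hU', h, Submodule.restrictScalars_top]

theorem isLinearlyPrimitive_of_isSimpleModule {H : Subgroup G} {M : Type*} [AddCommGroup M]
    [Module ℂ M] [Module ℂ[G] M] [IsScalarTower ℂ ℂ[G] M] [FiniteDimensional ℂ M]
    [IsSimpleModule ℂ[G] M] (hM : (H.fixedSubmodule ℂ M).pointwiseStabilizer ℂ = H) :
    IsLinearlyPrimitive H := by
  have := IsSimpleModule.nontrivial ℂ[G] M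
  -- `IsLinearlyPrimitive` asks for a representation space in `Type`, so move `M` there.
  let e := (finBasis ℂ M).equivFun
  let ρ : Representation ℂ G (Fin (finrank ℂ M) → ℂ) :=
    (e.conjAlgEquiv ℂ).toMonoidHom.comp (Representation.ofModule' (k := ℂ) (G := G) M)
  have hρ (g : G) (v) : ρ g v = e (of ℂ G g • e.symm v) := by
    simp [ρ, Representation.ofModule', LinearEquiv.conjAlgEquiv_apply]
  have hρ_fixed (g : G) (v) : ρ g v = v ↔ of ℂ G g • e.symm v = e.symm v := by
    rw [hρ, ← LinearEquiv.eq_symm_apply]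
  refine ⟨_, _, _, ρ, inferInstance, e.symm.toEquiv.nontrivial, fun U hU => ?_, ?_⟩
  · have hU' :
        ∀ g : G, ∀ m ∈ U.comap e.toLinearMap, of ℂ G g • m ∈ U.comap e.toLinearMap :=
      fun g m hm => by simpa [hρ] using hU g (e m) hm
    have hUe : (U.comap e.toLinearMap).map e.toLinearMap = U :=
      Submodule.map_comap_eq_of_surjective e.surjective U
    rcases Submodule.eq_bot_or_eq_top_of_forall_of_smul_mem hU' with h | h
    · left; rw [← hUe, h, Submodule.map_bot]
    · right; rw [← hUe, h, Submodule.map_top, LinearEquiv.range]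
  · conv_rhs => rw [← hM]
    ext g
    refine ⟨fun hg m hm => ?_, fun hg v hv => ?_⟩
    · simpa [hρ_fixed] using hg (e m) (fun h hh => by simpa [hρ_fixed] using hm h hh)
    · exact (hρ_fixed g v).mpr (hg _ fun h hh => (hρ_fixed h v).mp (hv h hh))

theorem exists_isMinimalOvergroup_fixedSubmodule_le [Finite G] {H : Subgroup G}
    (hH : ¬ IsLinearlyPrimitive H) (M : Type*) [AddCommGroup M]
    [Module ℂ M] [Module ℂ[G] M] [IsScalarTower ℂ ℂ[G] M] [FiniteDimensional ℂ M]
    [IsSimpleModule ℂ[G] M] :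
    ∃ K, IsMinimalOvergroup H K ∧ H.fixedSubmodule ℂ M ≤ K.fixedSubmodule ℂ M := by
  have hHL : H < (H.fixedSubmodule ℂ M).pointwiseStabilizer ℂ :=
    lt_of_le_of_ne (Submodule.le_pointwiseStabilizer_iff.mpr le_rfl)
      fun h => hH (isLinearlyPrimitive_of_isSimpleModule h.symm)
  obtain ⟨K, hK, hKL⟩ := exists_isMinimalOvergroup_le hHL
  exact ⟨K, hK, Submodule.le_pointwiseStabilizer_iff.mp hKL⟩

theorem fixedSubmodule_le_iSup_of_not_isLinearlyPrimitive [Finite G] {H : Subgroup G}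
    (hH : ¬ IsLinearlyPrimitive H) :
    H.fixedSubmodule ℂ ℂ[G] ≤
      ⨆ (K : Subgroup G) (_ : IsMinimalOvergroup H K), K.fixedSubmodule ℂ ℂ[G] := by
  have := Fintype.ofFinite H
  have := invertibleOfNonzero (NeZero.ne (Fintype.card H : ℂ))
  refine H.fixedSubmodule_le_of_forall_isSimpleModule fun p _ => ?_
  rintro v ⟨hvH, hvp⟩
  obtain ⟨K, hK, hle⟩ := exists_isMinimalOvergroup_fixedSubmodule_le hH p
  have hvK : (⟨v, hvp⟩ : p) ∈ K.fixedSubmodule ℂ p := hle fun h hh => Subtype.ext (hvH h hh)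
  exact Submodule.mem_iSup_of_mem K <| Submodule.mem_iSup_of_mem hK fun g hg =>
    congrArg Subtype.val (hvK g hg)

end LinearlyPrimitive

/-- If `H` is a proper subgroup of the finite group `G` and the minimal overgroups
`K₁, …, Kₙ` of `H` satisfy `∑ᵢ 1/|Kᵢ:H| ≤ 1`, then `[H,G]` is linearly primitive
(no distributivity needed). -/
theorem sum_le_one_linearly_primitive {G : Type*} [Group G] [Finite G]
    (H : Subgroup G) (hH : H ≠ ⊤)
    (S : Finset (Subgroup G))
    (hS : ∀ K : Subgroup G, K ∈ S ↔ IsMinimalOvergroup H K)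
    (hsum : ∑ K ∈ S, (1 : ℚ) / (H.relIndex K : ℚ) ≤ 1) :
    IsLinearlyPrimitive H := by
  by_contra hNP
  obtain ⟨K₀, hK₀, -⟩ := exists_isMinimalOvergroup_le hH.lt_top
  have hK₀S : K₀ ∈ S := (hS K₀).mpr hK₀
  have hfix := fixedSubmodule_le_iSup_of_not_isLinearlyPrimitive hNP
  simp only [← hS] at hfix
  have hH_le := Submodule.finrank_mono hfix
  have hdim := Submodule.finrank_biSup_add_card_mul_le S (fun K => K.fixedSubmodule ℂ ℂ[G])
    fun K _ => Subgroup.fixedSubmodule_antitone (le_top : K ≤ ⊤)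
  simp only [Subgroup.finrank_fixedSubmodule_monoidAlgebra, Subgroup.index_top, mul_one]
    at hH_le hdim
  have hsum_le := Subgroup.sum_index_le_index S (fun K hK => ((hS K).mp hK).1.le) hsum
  have hS₀ : S = {K₀} := Finset.eq_singleton_iff_unique_mem.mpr
    ⟨hK₀S, fun K hK => Finset.card_le_one.mp (by omega) K hK K₀ hK₀S⟩
  subst hS₀
  rw [Finset.sum_singleton, Finset.card_singleton] at hdim
  have := Subgroup.index_strictAnti hK₀.1
  omega
end

section
/- Let G be a finite group and H a proper subgroup of G admitting at most two minimal overgroups. Then [H,G] is linearly primitive. In particular, every boolean interval of rank n ≤ 2 is linearly primitive. -/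
/-!
Suppose `[H,G]` is not linearly primitive. Then for every irreducible representation `V` the
pointwise stabilizer of `V^H` strictly contains `H`, hence contains a minimal overgroup `K`, and
`V^H = V^K`. Decomposing the regular representation `ℂ[G]` into irreducibles (Maschke) and
averaging over `H` gives `ℂ[G]^H ≤ ℂ[G]^{K₁} ⊔ ℂ[G]^{K₂}`, where `K₁, K₂` are the minimal
overgroups. But `dim ℂ[G]^L = [G : L]`, each `[G : Kᵢ] ≤ [G : H] / 2`, and the two fixed spaces
share the constants, so the right-hand side has dimension at most `[G : H] - 1`.

A boolean interval of rank `n` has exactly `n` atoms, and `[G,G]` is primitive via the trivial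
representation.
-/

open MonoidAlgebra Representation

section MinimalOvergroup

variable {G : Type*} [Group G] {H K : Subgroup G}

lemma isMinimalOvergroup_iff_covBy : IsMinimalOvergroup H K ↔ H ⋖ K :=
  ⟨fun ⟨hlt, hmin⟩ => ⟨hlt, fun _ hHK' hK'K => hK'K.ne (hmin _ hHK' hK'K.le)⟩,
    fun h => ⟨h.lt, fun _ hHK' hK'K => hK'K.eq_of_not_lt (h.2 hHK')⟩⟩

lemma two_mul_index_le_index [H.FiniteIndex] (h : H < K) : 2 * K.index ≤ H.index := by
  obtain ⟨c, hc⟩ := Subgroup.index_dvd_of_le h.le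
  have hc₁ : 1 < c := Nat.lt_of_mul_lt_mul_left (a := K.index)
    (by rw [mul_one, ← hc]; exact Subgroup.index_strictAnti h)
  rw [hc, mul_comm]
  exact Nat.mul_le_mul_left _ hc₁

lemma Set.exists_mem_mem_subset_pair_of_ncard_le_two {α : Type*} {s : Set α} (hs : s.Finite)
    (hne : s.Nonempty) (h2 : s.ncard ≤ 2) : ∃ a ∈ s, ∃ b ∈ s, s ⊆ {a, b} := by
  have hpos : 0 < s.ncard := (Set.ncard_pos hs).2 hne
  interval_cases h : s.ncard
  · obtain ⟨a, rfl⟩ := Set.ncard_eq_one.1 h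
    exact ⟨a, rfl, a, rfl, by simp⟩
  · obtain ⟨a, b, -, rfl⟩ := Set.ncard_eq_two.1 h
    exact ⟨a, by simp, b, by simp, le_rfl⟩

lemma exists_covBy_pair_of_ncard_le_two [Finite G] (hH : H ≠ ⊤)
    (h2 : {K | IsMinimalOvergroup H K}.ncard ≤ 2) :
    ∃ K₁ K₂, H ⋖ K₁ ∧ H ⋖ K₂ ∧ ∀ K, H ⋖ K → K = K₁ ∨ K = K₂ := by
  simp only [isMinimalOvergroup_iff_covBy] at h2
  obtain ⟨K₁, hK₁, K₂, hK₂, hcover⟩ := Set.exists_mem_mem_subset_pair_of_ncard_le_two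
    (Set.toFinite _) ((exists_covBy_le_of_lt (lt_top_iff_ne_top.2 hH)).imp fun _ h => h.1) h2
  exact ⟨K₁, K₂, hK₁, hK₂, fun K hK => hcover hK⟩

lemma ncard_isMinimalOvergroup_le_of_orderIso {n : ℕ} (e : Set.Icc H ⊤ ≃o Set (Fin n)) :
    {K | IsMinimalOvergroup H K}.ncard ≤ n := by
  let bot : Set.Icc H ⊤ := ⟨H, le_rfl, le_top⟩
  have he_bot : e bot = ∅ :=
    Set.subset_empty_iff.1 ((e.monotone (e.symm ∅).2.1).trans_eq (e.apply_symm_apply ∅))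
  have hsub : {K | IsMinimalOvergroup H K} ⊆ (fun a => (e.symm {a} : Subgroup G)) '' Set.univ := by
    intro K hK
    have hcov : bot ⋖ ⟨K, hK.1.le, le_top⟩ :=
      ⟨hK.1, fun K' h1 h2 => (isMinimalOvergroup_iff_covBy.1 hK).2 h1 h2⟩
    obtain ⟨a, -, ha⟩ := Set.covBy_iff_exists_insert.1 (he_bot ▸ (apply_covBy_apply_iff e).2 hcov)
    rw [insert_empty_eq] at ha
    exact ⟨a, trivial, by simp only [ha, e.symm_apply_apply]⟩
  calc {K | IsMinimalOvergroup H K}.ncard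
      ≤ ((fun a => (e.symm {a} : Subgroup G)) '' Set.univ).ncard := Set.ncard_le_ncard hsub
    _ ≤ (Set.univ : Set (Fin n)).ncard := Set.ncard_image_le Set.finite_univ
    _ = n := by simp

end MinimalOvergroup

namespace Representation

variable {k G V : Type*} [CommRing k] [Group G] [AddCommGroup V] [Module k V]
  (ρ : Representation k G V)

noncomputable abbrev fixedSpace (L : Subgroup G) : Submodule k V :=
  invariants (ρ.comp L.subtype)

variable {ρ} in
lemma mem_fixedSpace {L : Subgroup G} {v : V} : v ∈ ρ.fixedSpace L ↔ ∀ g ∈ L, ρ g v = v := by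
  simp [mem_invariants]

lemma fixedSpace_anti {L L' : Subgroup G} (h : L ≤ L') : ρ.fixedSpace L' ≤ ρ.fixedSpace L :=
  fun _ hv => mem_fixedSpace.2 fun g hg => mem_fixedSpace.1 hv g (h hg)

def pointwiseStabilizer (W : Submodule k V) : Subgroup G where
  carrier := {g | ∀ v ∈ W, ρ g v = v}
  one_mem' := by simp
  mul_mem' hg hg' v hv := by simp [hg' v hv, hg v hv]
  inv_mem' {g} hg v hv := by
    conv_lhs => rw [← hg v hv]
    exact ρ.inv_self_apply g v

lemma le_pointwiseStabilizer_fixedSpace (L : Subgroup G) :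
    L ≤ ρ.pointwiseStabilizer (ρ.fixedSpace L) :=
  fun _ hg _ hv => mem_fixedSpace.1 hv _ hg

lemma coe_pointwiseStabilizer_fixedSpace (H : Subgroup G) :
    (ρ.pointwiseStabilizer (ρ.fixedSpace H) : Set G) =
      {g | ∀ v, (∀ h, h ∈ H → ρ h v = v) → ρ g v = v} := by
  ext
  simp [pointwiseStabilizer]

lemma exists_covBy_fixedSpace_le [Finite G] {H : Subgroup G}
    (h : ρ.pointwiseStabilizer (ρ.fixedSpace H) ≠ H) :
    ∃ K, H ⋖ K ∧ ρ.fixedSpace H ≤ ρ.fixedSpace K := by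
  obtain ⟨K, hHK, hK⟩ :=
    exists_covBy_le_of_lt ((ρ.le_pointwiseStabilizer_fixedSpace H).lt_of_ne' h)
  exact ⟨K, hHK, fun v hv => mem_fixedSpace.2 fun g hg => hK hg v hv⟩

end Representation

section GroupAlgebraModule

variable {k G M : Type*} [CommRing k] [Group G] [AddCommGroup M] [Module k M] [Module k[G] M]
  [IsScalarTower k k[G] M]

lemma ofModule'_apply (g : G) (m : M) : ofModule' (k := k) M g m = of k G g • m := rfl

lemma exists_restrictScalars_eq_of_invariant (U : Submodule k M)
    (hU : ∀ g : G, ∀ v ∈ U, ofModule' (k := k) M g v ∈ U) :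
    ∃ U' : Submodule k[G] M, U'.restrictScalars k = U := by
  refine ⟨{ U with smul_mem' := fun a v hv => ?_ }, rfl⟩
  induction a using MonoidAlgebra.induction_on with
  | of g => exact hU g v hv
  | add a b ha hb => rw [add_smul]; exact U.add_mem ha hb
  | smul r a ha => rw [smul_assoc]; exact U.smul_mem r ha

lemma eq_bot_or_eq_top_of_invariant [IsSimpleModule k[G] M] (U : Submodule k M)
    (hU : ∀ g : G, ∀ v ∈ U, ofModule' (k := k) M g v ∈ U) : U = ⊥ ∨ U = ⊤ := by
  obtain ⟨U', rfl⟩ := exists_restrictScalars_eq_of_invariant U hU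
  simpa only [Submodule.restrictScalars_eq_bot_iff, Submodule.restrictScalars_eq_top_iff]
    using IsSimpleOrder.eq_bot_or_eq_top U'

lemma coe_mem_fixedSpace_ofModule'_iff {S : Submodule k[G] M} {L : Subgroup G} {v : S} :
    (v : M) ∈ (ofModule' (k := k) M).fixedSpace L ↔ v ∈ (ofModule' (k := k) S).fixedSpace L := by
  simp only [mem_fixedSpace, ofModule'_apply, Subtype.ext_iff, Submodule.coe_smul_of_tower]

end GroupAlgebraModule

section Semisimple

variable {k G M : Type*} [Field k] [CharZero k] [Group G] [Finite G] [AddCommGroup M] [Module k M]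
  [Module k[G] M] [IsScalarTower k k[G] M]

lemma fixedSpace_le_of_forall_isSimpleModule (H : Subgroup G) (T : Submodule k M)
    (hT : ∀ S : Submodule k[G] M, IsSimpleModule k[G] S →
      S.restrictScalars k ⊓ (ofModule' (k := k) M).fixedSpace H ≤ T) :
    (ofModule' (k := k) M).fixedSpace H ≤ T := by
  have := Fintype.ofFinite H
  have : Invertible (Fintype.card H : k) :=
    invertibleOfNonzero (Nat.cast_ne_zero.2 Fintype.card_ne_zero)
  set avg := averageMap ((ofModule' (k := k) M).comp H.subtype)
  -- averaging over `H` is the action of an element of `k[G]`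
  have havg_mem {S : Submodule k[G] M} {v : M} (hv : v ∈ S) : avg v ∈ S := by
    simp only [avg, averageMap, GroupAlgebra.average, map_smul, map_sum, asAlgebraHom_of,
      LinearMap.smul_apply, LinearMap.sum_apply]
    exact S.smul_of_tower_mem _ (S.sum_mem fun h _ => S.smul_of_tower_mem _ hv)
  have havg_le (v : M) : avg v ∈ T := by
    have hv : v ∈ sSup {S : Submodule k[G] M | IsSimpleModule k[G] S} := by
      rw [IsSemisimpleModule.sSup_simples_eq_top]; trivial
    rw [sSup_eq_iSup'] at hv
    refine Submodule.iSup_induction _ (motive := fun w => avg w ∈ T) hv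
      (fun S w hw => hT S S.2 ⟨havg_mem hw, averageMap_invariant _ w⟩) (by simp) fun v w hv hw => ?_
    rw [map_add]; exact T.add_mem hv hw
  exact fun v hv => averageMap_id _ v hv ▸ havg_le v

end Semisimple

section RegularRepresentation

variable {k G : Type*} [Field k] [Group G]

lemma trace_ofModule'_self [Fintype G] [DecidableEq G] (g : G) :
    LinearMap.trace k k[G] (ofModule' k[G] g) = if g = 1 then (Nat.card G : k) else 0 := by
  rw [LinearMap.trace_eq_matrix_trace k (MonoidAlgebra.basis G k), Matrix.trace]
  simp [LinearMap.toMatrix_apply, ofModule', MonoidAlgebra.basis, Finsupp.single_apply,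
    mul_eq_right]

variable [CharZero k] [Finite G]

lemma finrank_fixedSpace_ofModule'_self (L : Subgroup G) :
    Module.finrank k ((ofModule' (k := k) (G := G) k[G]).fixedSpace L) = L.index := by
  classical
  have := Fintype.ofFinite G
  have hL : (Nat.card L : k) ≠ 0 := Nat.cast_ne_zero.2 Nat.card_pos.ne'
  have := invertibleOfNonzero hL
  have h := card_inv_mul_sum_char_eq_finrank ((ofModule' (k := k) (G := G) k[G]).comp L.subtype)
  simp only [character, MonoidHom.coe_comp, Subgroup.coe_subtype, Function.comp_apply,
    trace_ofModule'_self, OneMemClass.coe_eq_one, Finset.sum_ite_eq', Finset.mem_univ,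
    if_true] at h
  rw [← L.index_mul_card, Nat.cast_mul, mul_comm (L.index : k), inv_mul_cancel_left₀ hL] at h
  exact_mod_cast h.symm

lemma not_fixedSpace_le_sup_of_lt {H K₁ K₂ : Subgroup G} (h₁ : H < K₁) (h₂ : H < K₂) :
    ¬ (ofModule' (k := k) (G := G) k[G]).fixedSpace H ≤
      (ofModule' k[G]).fixedSpace K₁ ⊔ (ofModule' k[G]).fixedSpace K₂ := by
  intro hle
  set ρ := ofModule' (k := k) (G := G) k[G]
  have hH := Submodule.finrank_mono hle
  have hsup := Submodule.finrank_sup_add_finrank_inf_eq (ρ.fixedSpace K₁) (ρ.fixedSpace K₂)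
  have hinf := Submodule.finrank_mono
    (le_inf (ρ.fixedSpace_anti le_top) (ρ.fixedSpace_anti le_top) :
      ρ.fixedSpace ⊤ ≤ ρ.fixedSpace K₁ ⊓ ρ.fixedSpace K₂)
  simp only [ρ, finrank_fixedSpace_ofModule'_self, Subgroup.index_top] at hH hsup hinf
  -- `[G : H] ≤ [G : K₁] + [G : K₂] - 1 ≤ [G : H] - 1`
  have := two_mul_index_le_index h₁
  have := two_mul_index_le_index h₂
  omega

end RegularRepresentation

section LinearlyPrimitive

variable {G : Type} [Group G] {H : Subgroup G}

lemma exists_covBy_inf_fixedSpace_le_of_not_isLinearlyPrimitive [Finite G]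
    {M : Type} [AddCommGroup M] [Module ℂ M] [FiniteDimensional ℂ M] [Module ℂ[G] M]
    [IsScalarTower ℂ ℂ[G] M] (hH : ¬ IsLinearlyPrimitive H) (S : Submodule ℂ[G] M)
    [IsSimpleModule ℂ[G] S] :
    ∃ K, H ⋖ K ∧ S.restrictScalars ℂ ⊓ (ofModule' (k := ℂ) M).fixedSpace H ≤
      (ofModule' M).fixedSpace K := by
  set σ := ofModule' (k := ℂ) (G := G) S
  have : FiniteDimensional ℂ S := inferInstanceAs (FiniteDimensional ℂ (S.restrictScalars ℂ))
  have hstab : σ.pointwiseStabilizer (σ.fixedSpace H) ≠ H := fun h =>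
    hH ⟨S, _, _, σ, inferInstance, IsSimpleModule.nontrivial ℂ[G] S,
      eq_bot_or_eq_top_of_invariant, by rw [← coe_pointwiseStabilizer_fixedSpace, h]⟩
  obtain ⟨K, hHK, hK⟩ := σ.exists_covBy_fixedSpace_le hstab
  refine ⟨K, hHK, fun v ⟨hvS, hvH⟩ => ?_⟩
  exact coe_mem_fixedSpace_ofModule'_iff (v := ⟨v, hvS⟩) |>.2
    (hK (coe_mem_fixedSpace_ofModule'_iff.1 hvH))

theorem isLinearlyPrimitive_of_ncard_le_two [Finite G] (hH : H ≠ ⊤)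
    (h2 : {K | IsMinimalOvergroup H K}.ncard ≤ 2) : IsLinearlyPrimitive H := by
  by_contra hprim
  obtain ⟨K₁, K₂, hK₁, hK₂, hcover⟩ := exists_covBy_pair_of_ncard_le_two hH h2
  refine not_fixedSpace_le_sup_of_lt (k := ℂ) hK₁.lt hK₂.lt
    (fixedSpace_le_of_forall_isSimpleModule H _ fun S _ => ?_)
  obtain ⟨K, hK, hle⟩ := exists_covBy_inf_fixedSpace_le_of_not_isLinearlyPrimitive hprim S
  rcases hcover K hK with rfl | rfl
  exacts [hle.trans le_sup_left, hle.trans le_sup_right]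

lemma isLinearlyPrimitive_top : IsLinearlyPrimitive (⊤ : Subgroup G) := by
  refine ⟨ℂ, _, _, 1, inferInstance, inferInstance, fun U _ => IsSimpleOrder.eq_bot_or_eq_top U, ?_⟩
  ext
  simp

end LinearlyPrimitive

/-- If a proper subgroup `H` of a finite group `G` admits at most two minimal
overgroups, then `[H,G]` is linearly primitive. In particular, every boolean
interval of rank `n ≤ 2` is linearly primitive. -/
theorem at_most_two_minimal_overgroups_linearly_primitive :
    (∀ (G : Type) [Group G] [Finite G] (H : Subgroup G), H ≠ ⊤ →
      {K : Subgroup G | IsMinimalOvergroup H K}.ncard ≤ 2 →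
      IsLinearlyPrimitive H) ∧
    (∀ (G : Type) [Group G] [Finite G] (H : Subgroup G) (n : ℕ), n ≤ 2 →
      ((Set.Icc H (⊤ : Subgroup G)) ≃o Set (Fin n)) →
      IsLinearlyPrimitive H) := by
  refine ⟨fun G _ _ H hH h2 => isLinearlyPrimitive_of_ncard_le_two hH h2,
    fun G _ _ H n hn e => ?_⟩
  rcases eq_or_ne H ⊤ with rfl | hH
  · exact isLinearlyPrimitive_top
  · exact isLinearlyPrimitive_of_ncard_le_two hH
      ((ncard_isMinimalOvergroup_le_of_orderIso e).trans hn)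
end

section
/- Let [H,G] be a boolean interval of finite groups of rank 2 with atoms K and L. Then it is not the case that |G:K| = |G:L| = 2, and it is not the case that |K:H| = |L:H| = 2. -/
/-!
If `|G:K| = |G:L| = 2`, the elements lying in both or in neither of `K`, `L` form a third
subgroup of index `2` above `H = K ∩ L`, so the interval has a fifth member.

If `|K:H| = |L:H| = 2`, then `H` is normalized by `K` and `L`, hence normal in `G = K ⊔ L`.
Pick `x ∈ K \ H`, `y ∈ L \ H`. The preimage of `⟨xH · yH⟩` contains `xy ∉ K ∪ L`, so it must
be `G`; then `G/H` is cyclic and generated by the product of two commuting involutions `xH`, `yH`,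
which forces one of them to be trivial.
-/

namespace Subgroup

variable {G : Type*} [Group G]

theorem exists_forall_mem_iff_mem_iff_mem_of_index_eq_two {K L : Subgroup G}
    (hK : K.index = 2) (hL : L.index = 2) :
    ∃ N : Subgroup G, ∀ g, g ∈ N ↔ (g ∈ K ↔ g ∈ L) :=
  ⟨{ carrier := {g | g ∈ K ↔ g ∈ L}
     one_mem' := iff_of_true K.one_mem L.one_mem
     mul_mem' := fun {a b} (ha : a ∈ K ↔ a ∈ L) (hb : b ∈ K ↔ b ∈ L) =>
       show a * b ∈ K ↔ a * b ∈ L by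
         rw [mul_mem_iff_of_index_two hK, mul_mem_iff_of_index_two hL, ha, hb]
     inv_mem' := fun {a} (ha : a ∈ K ↔ a ∈ L) => show a⁻¹ ∈ K ↔ a⁻¹ ∈ L by
       rwa [inv_mem_iff, inv_mem_iff] },
    fun _ => Iff.rfl⟩

variable {H K : Subgroup G}

theorem sq_mem_of_relIndex_eq_two (h : H.relIndex K = 2) {k : G} (hk : k ∈ K) : k ^ 2 ∈ H :=
  mem_subgroupOf.mp (sq_mem_of_index_two h ⟨k, hk⟩)

theorem le_normalizer_of_relIndex_eq_two (hHK : H ≤ K) (h : H.relIndex K = 2) :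
    K ≤ normalizer (H : Set G) :=
  have : (H.subgroupOf K).Normal := normal_of_index_eq_two h
  le_normalizer_of_normal_subgroupOf hHK

end Subgroup

open Subgroup

theorem eq_one_or_eq_one_of_zpowers_mul_eq_top {Q : Type*} [Group Q] {a b : Q}
    (ha : a ^ 2 = 1) (hb : b ^ 2 = 1) (hab : zpowers (a * b) = ⊤) : a = 1 ∨ b = 1 := by
  have hgen : ∀ g : Q, ∃ n : ℤ, (a * b) ^ n = g :=
    fun g => mem_zpowers_iff.mp (hab ▸ mem_top g)
  have hcomm : Commute a b := by
    obtain ⟨m, hm⟩ := hgen a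
    obtain ⟨n, hn⟩ := hgen b
    have := Commute.zpow_zpow_self (a * b) m n
    rwa [hm, hn] at this
  have hsq : (a * b) ^ 2 = 1 := by rw [hcomm.mul_pow, ha, hb, one_mul]
  obtain ⟨n, hn⟩ := hgen a
  obtain ⟨k, rfl | rfl⟩ := Int.even_or_odd' n
  · rw [zpow_mul, zpow_ofNat, hsq, one_zpow] at hn
    exact .inl hn.symm
  · rw [zpow_add_one, zpow_mul, zpow_ofNat, hsq, one_zpow, one_mul, mul_eq_left] at hn
    exact .inr hn

section RankTwoBoolean

variable {G : Type*} [Group G] {H K L : Subgroup G}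

theorem notMem_of_inf_eq_of_mem_of_notMem (hmeet : K ⊓ L = H) {x : G} (hxK : x ∈ K)
    (hxH : x ∉ H) : x ∉ L :=
  fun hxL => hxH (hmeet ▸ ⟨hxK, hxL⟩)

theorem not_index_eq_two_and_index_eq_two_of_Icc_subset (hHK : H < K) (hHL : H < L)
    (hmeet : K ⊓ L = H) (hset : Set.Icc H ⊤ ⊆ {H, K, L, ⊤}) :
    ¬(K.index = 2 ∧ L.index = 2) := by
  rintro ⟨hK, hL⟩
  obtain ⟨x, hxK, hxH⟩ := SetLike.exists_of_lt hHK
  obtain ⟨y, hyL, hyH⟩ := SetLike.exists_of_lt hHL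
  have hxL : x ∉ L := notMem_of_inf_eq_of_mem_of_notMem hmeet hxK hxH
  have hyK : y ∉ K := notMem_of_inf_eq_of_mem_of_notMem (inf_comm K L ▸ hmeet) hyL hyH
  obtain ⟨N, hN⟩ := exists_forall_mem_iff_mem_iff_mem_of_index_eq_two hK hL
  have hHN : H ≤ N := fun h hh => (hN h).2 (iff_of_true (hHK.le hh) (hHL.le hh))
  have hxyK : x * y ∉ K := by simp [mul_mem_iff_of_index_two hK, hxK, hyK]
  have hxyL : x * y ∉ L := by simp [mul_mem_iff_of_index_two hL, hxL, hyL]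
  have hxyN : x * y ∈ N := (hN _).2 (iff_of_false hxyK hxyL)
  rcases hset ⟨hHN, le_top⟩ with hNH | hNK | hNL | hNtop
  · exact hxyK (hHK.le (hNH ▸ hxyN))
  · exact hxyK (hNK ▸ hxyN)
  · exact hxyL (hNL ▸ hxyN)
  · exact hxL (((hN x).1 (hNtop ▸ mem_top x)).1 hxK)

theorem not_relIndex_eq_two_and_relIndex_eq_two_of_Icc_subset (hHK : H < K) (hHL : H < L)
    (hmeet : K ⊓ L = H) (hjoin : K ⊔ L = ⊤) (hset : Set.Icc H ⊤ ⊆ {H, K, L, ⊤}) :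
    ¬(H.relIndex K = 2 ∧ H.relIndex L = 2) := by
  rintro ⟨hK, hL⟩
  obtain ⟨x, hxK, hxH⟩ := SetLike.exists_of_lt hHK
  obtain ⟨y, hyL, hyH⟩ := SetLike.exists_of_lt hHL
  have hxL : x ∉ L := notMem_of_inf_eq_of_mem_of_notMem hmeet hxK hxH
  have hyK : y ∉ K := notMem_of_inf_eq_of_mem_of_notMem (inf_comm K L ▸ hmeet) hyL hyH
  have : H.Normal := normalizer_eq_top_iff.mp <| eq_top_iff.mpr <| hjoin ▸
    sup_le (le_normalizer_of_relIndex_eq_two hHK.le hK)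
      (le_normalizer_of_relIndex_eq_two hHL.le hL)
  obtain ⟨M, hM⟩ : ∃ M, M = (zpowers ((x : G ⧸ H) * y)).comap (QuotientGroup.mk' H) := ⟨_, rfl⟩
  have hHM : H ≤ M := by
    subst hM
    exact fun h hh => by simp [(QuotientGroup.eq_one_iff h).mpr hh]
  have hxyM : x * y ∈ M := hM ▸ mem_zpowers _
  rcases hset ⟨hHM, le_top⟩ with hMH | hMK | hML | hMtop
  · exact hyK ((K.mul_mem_cancel_left hxK).1 (hHK.le (hMH ▸ hxyM)))
  · exact hyK ((K.mul_mem_cancel_left hxK).1 (hMK ▸ hxyM))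
  · exact hxL ((L.mul_mem_cancel_right hyL).1 (hML ▸ hxyM))
  · have hgen : zpowers ((x : G ⧸ H) * y) = ⊤ :=
      comap_injective (QuotientGroup.mk'_surjective H)
        ((hM.symm.trans hMtop).trans (comap_top _).symm)
    have hsq : ∀ {k : G}, k ^ 2 ∈ H → (k : G ⧸ H) ^ 2 = 1 := fun hk =>
      (QuotientGroup.eq_one_iff _).mpr hk
    rcases eq_one_or_eq_one_of_zpowers_mul_eq_top (hsq (sq_mem_of_relIndex_eq_two hK hxK))
      (hsq (sq_mem_of_relIndex_eq_two hL hyL)) hgen with hx | hy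
    · exact hxH ((QuotientGroup.eq_one_iff x).mp hx)
    · exact hyH ((QuotientGroup.eq_one_iff y).mp hy)

end RankTwoBoolean

theorem rank_two_boolean_no_double_index_two_general {G : Type*} [Group G]
    (H K L : Subgroup G)
    (hHK : H < K) (hHL : H < L)
    (hmeet : K ⊓ L = H) (hjoin : K ⊔ L = ⊤)
    (hset : Set.Icc H (⊤ : Subgroup G) = {H, K, L, ⊤}) :
    ¬(K.index = 2 ∧ L.index = 2) ∧ ¬(H.relIndex K = 2 ∧ H.relIndex L = 2) :=
  ⟨not_index_eq_two_and_index_eq_two_of_Icc_subset hHK hHL hmeet hset.subset,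
    not_relIndex_eq_two_and_relIndex_eq_two_of_Icc_subset hHK hHL hmeet hjoin hset.subset⟩

/-- In a rank `2` boolean interval `[H,G]` with atoms `K` and `L`, one cannot have
`|G:K| = |G:L| = 2`, nor `|K:H| = |L:H| = 2`. -/
theorem rank_two_boolean_no_double_index_two {G : Type*} [Group G] [Finite G]
    (H K L : Subgroup G)
    (hKL : K ≠ L) (hHK : H < K) (hHL : H < L) (hKtop : K ≠ ⊤) (hLtop : L ≠ ⊤)
    (hmeet : K ⊓ L = H) (hjoin : K ⊔ L = ⊤)
    (hset : Set.Icc H (⊤ : Subgroup G) = {H, K, L, ⊤}) :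
    ¬(K.index = 2 ∧ L.index = 2) ∧ ¬(H.relIndex K = 2 ∧ H.relIndex L = 2) :=
  rank_two_boolean_no_double_index_two_general H K L hHK hHL hmeet hjoin hset
end

section
/- Let [H,G] be a boolean interval of finite groups of rank 2 with atoms K and L. If H is a normal subgroup of both K and L, then |K:H| ≠ |L:H|. If K and L are both normal subgroups of G, then |G:K| ≠ |G:L|. -/
/-! In both cases `H` is normal in `G`: it is normalized by `K` and `L`, hence by
`K ⊔ L = G`, or it is `K ⊓ L`. A group is never the union of two proper subgroups, so some `g`
lies outside `K ∪ L`; then `⟨g⟩H` belongs to `[H,G]` but is none of `H`, `K`, `L`, so it is `G`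
and `G/H` is cyclic. Subgroups of a finite cyclic group are determined by their order, so `K/H`
and `L/H`, which have the same index in `G/H`, coincide, i.e. `K = L`. -/

open Subgroup QuotientGroup

theorem IsCyclic.coe_subgroup_eq_setOf_pow_card_eq_one {Q : Type*} [Group Q] [Finite Q]
    [IsCyclic Q] (A : Subgroup Q) : (A : Set Q) = {x | x ^ Nat.card A = 1} := by
  classical
  cases nonempty_fintype Q
  refine Set.eq_of_subset_of_ncard_le (fun x hx => ?_) ?_
  · exact congrArg Subtype.val (pow_card_eq_one' (G := A) (x := ⟨x, hx⟩))
  · rw [Set.ncard_eq_toFinset_card', Set.toFinset_ofPred]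
    exact (IsCyclic.card_pow_eq_one_le Nat.card_pos).trans_eq (Nat.card_coe_set_eq _)

theorem IsCyclic.subgroup_eq_of_index_eq {Q : Type*} [Group Q] [Finite Q] [IsCyclic Q]
    {A B : Subgroup Q} (h : A.index = B.index) : A = B := by
  have hcard : Nat.card A = Nat.card B := by
    have hA := A.card_mul_index
    rw [h, ← B.card_mul_index] at hA
    exact Nat.eq_of_mul_eq_mul_right (Nat.pos_of_ne_zero B.index_ne_zero_of_finite) hA
  apply SetLike.coe_injective
  rw [coe_subgroup_eq_setOf_pow_card_eq_one, coe_subgroup_eq_setOf_pow_card_eq_one, hcard]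

theorem QuotientGroup.isCyclic_of_zpowers_sup_eq_top {G : Type*} [Group G] {H : Subgroup G}
    [H.Normal] {g : G} (hg : zpowers g ⊔ H = ⊤) : IsCyclic (G ⧸ H) := by
  refine isCyclic_iff_exists_zpowers_eq_top.mpr ⟨g, ?_⟩
  have := congrArg (Subgroup.map (mk' H)) hg
  rwa [Subgroup.map_sup, MonoidHom.map_zpowers, map_mk'_self, sup_bot_eq,
    map_top_of_surjective _ (mk'_surjective H)] at this

theorem Subgroup.exists_zpowers_sup_eq_top_of_Icc_eq {G : Type*} [Group G] {H K L : Subgroup G}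
    (hK : K ≠ ⊤) (hL : L ≠ ⊤) (hset : Set.Icc H ⊤ = {H, K, L, ⊤}) :
    ∃ g : G, zpowers g ⊔ H = ⊤ := by
  have hcover : ¬ ((⊤ : Subgroup G) : Set G) ⊆ K ∪ L := by
    rw [SubgroupClass.subset_union]
    simpa [top_le_iff] using ⟨hK, hL⟩
  obtain ⟨g, -, hg⟩ := Set.not_subset.mp hcover
  have hHK : H ≤ K := (hset ▸ by simp : K ∈ Set.Icc H ⊤).1
  have hmem : g ∈ zpowers g ⊔ H := mem_sup_left (mem_zpowers g)
  have hIcc : zpowers g ⊔ H ∈ Set.Icc H ⊤ := ⟨le_sup_right, le_top⟩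
  refine ⟨g, ?_⟩
  rw [hset] at hIcc
  rcases hIcc with h | h | h | h
  · exact (hg (.inl (hHK (h ▸ hmem)))).elim
  · exact (hg (.inl (h ▸ hmem))).elim
  · exact (hg (.inr (h ▸ hmem))).elim
  · exact h

theorem Subgroup.eq_of_index_eq_of_isCyclic_quotient {G : Type*} [Group G] {H K L : Subgroup G}
    [H.Normal] [Finite (G ⧸ H)] [IsCyclic (G ⧸ H)] (hK : H ≤ K) (hL : H ≤ L)
    (h : K.index = L.index) : K = L := by
  have hKker : (mk' H).ker ≤ K := by rwa [ker_mk']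
  have hLker : (mk' H).ker ≤ L := by rwa [ker_mk']
  have hmap : K.map (mk' H) = L.map (mk' H) := by
    apply IsCyclic.subgroup_eq_of_index_eq
    rwa [index_map_eq _ (mk'_surjective H) hKker, index_map_eq _ (mk'_surjective H) hLker]
  rw [← comap_map_eq_self hKker, hmap, comap_map_eq_self hLker]

theorem Subgroup.normal_of_normal_subgroupOf_of_sup_eq_top {G : Type*} [Group G]
    {H K L : Subgroup G} (hK : H ≤ K) (hL : H ≤ L) [(H.subgroupOf K).Normal]
    [(H.subgroupOf L).Normal] (hKL : K ⊔ L = ⊤) : H.Normal := by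
  rw [← normalizer_eq_top_iff, eq_top_iff, ← hKL]
  exact sup_le (le_normalizer_of_normal_subgroupOf hK) (le_normalizer_of_normal_subgroupOf hL)

theorem Subgroup.index_eq_of_relIndex_eq {G : Type*} [Group G] {H K L : Subgroup G}
    (hK : H ≤ K) (hL : H ≤ L) (hH : H.index ≠ 0) (h : H.relIndex K = H.relIndex L) :
    K.index = L.index := by
  have hK' := relIndex_mul_index hK
  have hL' := relIndex_mul_index hL
  rw [h] at hK'
  exact Nat.eq_of_mul_eq_mul_left (Nat.pos_of_ne_zero (left_ne_zero_of_mul (hL'.trans_ne hH)))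
    (hK'.trans hL'.symm)

/-- In a rank `2` boolean interval `[H,G]` with atoms `K` and `L`: if `H` is normal
in both `K` and `L` then `|K:H| ≠ |L:H|`; if `K` and `L` are both normal in `G`
then `|G:K| ≠ |G:L|`. -/
theorem rank_two_boolean_distinct_indices {G : Type*} [Group G] [Finite G]
    (H K L : Subgroup G)
    (hKL : K ≠ L) (hHK : H < K) (hHL : H < L) (hKtop : K ≠ ⊤) (hLtop : L ≠ ⊤)
    (hmeet : K ⊓ L = H) (hjoin : K ⊔ L = ⊤)
    (hset : Set.Icc H (⊤ : Subgroup G) = {H, K, L, ⊤}) :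
    ((H.subgroupOf K).Normal → (H.subgroupOf L).Normal →
      H.relIndex K ≠ H.relIndex L) ∧
    (K.Normal → L.Normal → K.index ≠ L.index) := by
  have eq_of_index : H.Normal → K.index = L.index → K = L := fun _ hidx => by
    obtain ⟨g, hg⟩ := exists_zpowers_sup_eq_top_of_Icc_eq hKtop hLtop hset
    have := QuotientGroup.isCyclic_of_zpowers_sup_eq_top hg
    exact eq_of_index_eq_of_isCyclic_quotient hHK.le hHL.le hidx
  refine ⟨fun _ _ hrel => hKL (eq_of_index ?_ ?_), fun _ _ hidx => hKL (eq_of_index ?_ hidx)⟩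
  · exact normal_of_normal_subgroupOf_of_sup_eq_top hHK.le hHL.le hjoin
  · exact index_eq_of_relIndex_eq hHK.le hHL.le H.index_ne_zero_of_finite hrel
  · exact hmeet ▸ normal_inf_normal K L
end

section
/- Let [H,G] be a boolean interval of finite groups, A an atom of [H,G], and A^∁ its complement. For any K_1, K_2 ∈ [H, A^∁] with K_1 ⊆ K_2, one has |⟨K_1, A⟩ : K_1| ≤ |⟨K_2, A⟩ : K_2|. Moreover, if |G : A^∁| = 2 then |⟨K, A⟩ : K| = 2 for every K ∈ [H, A^∁]. -/
namespace Subgroup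

variable {G : Type*} [Group G]

theorem relIndex_eq_two_of_index_eq_two {H K : Subgroup G} (hH : H.index = 2) (hK : ¬K ≤ H) :
    H.relIndex K = 2 := by
  have := normal_of_index_eq_two hH
  have hdvd : H.relIndex K ∣ 2 := hH ▸ relIndex_dvd_index_of_normal H K
  exact ((Nat.dvd_prime Nat.prime_two).1 hdvd).resolve_left (mt relIndex_eq_one.1 hK)

theorem relIndex_le_relIndex_of_le_right [Finite G] {H K L : Subgroup G} (hKL : K ≤ L) :
    H.relIndex K ≤ H.relIndex L :=
  relIndex_le_of_le_right hKL (index_ne_zero_of_finite (H := H.subgroupOf L))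

end Subgroup

namespace IsBooleanInterval

variable {G : Type*} [Group G] {H K L M : Subgroup G}

theorem inf_sup_right (hb : IsBooleanInterval H) (hK : H ≤ K) (hL : H ≤ L) (hM : H ≤ M) :
    (K ⊔ L) ⊓ M = K ⊓ M ⊔ L ⊓ M := by
  obtain ⟨n, ⟨e⟩⟩ := hb
  let toIcc : ∀ X : Subgroup G, H ≤ X → Set.Icc H (⊤ : Subgroup G) := fun X hX => ⟨X, hX, le_top⟩
  have h : (toIcc K hK ⊔ toIcc L hL) ⊓ toIcc M hM
      = toIcc K hK ⊓ toIcc M hM ⊔ toIcc L hL ⊓ toIcc M hM :=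
    e.injective (by simp only [map_sup, map_inf, _root_.inf_sup_right])
  exact congrArg Subtype.val h

theorem sup_inf_complement_eq (hb : IsBooleanInterval H) {A Ac : Subgroup G} (hA : H ≤ A)
    (hAc : H ≤ Ac) (hmeet : A ⊓ Ac = H) (hK : H ≤ K) (hKAc : K ≤ Ac) :
    (K ⊔ A) ⊓ Ac = K := by
  rw [hb.inf_sup_right hK hA hAc, inf_eq_left.2 hKAc, hmeet, sup_eq_left.2 hK]

theorem relIndex_sup_eq_relIndex_complement (hb : IsBooleanInterval H) {A Ac : Subgroup G}
    (hA : H ≤ A) (hAc : H ≤ Ac) (hmeet : A ⊓ Ac = H) (hK : H ≤ K) (hKAc : K ≤ Ac) :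
    K.relIndex (K ⊔ A) = Ac.relIndex (K ⊔ A) := by
  rw [← Subgroup.inf_relIndex_right Ac, inf_comm, hb.sup_inf_complement_eq hA hAc hmeet hK hKAc]

end IsBooleanInterval

theorem relindex_monotone_along_atom_general {G : Type*} [Group G] [Finite G]
    (H A Ac : Subgroup G) (hbool : IsBooleanInterval H)
    (hatom : IsMinimalOvergroup H A)
    (hAc : H ≤ Ac) (hmeet : A ⊓ Ac = H) :
    (∀ K₁ K₂ : Subgroup G, H ≤ K₁ → K₁ ≤ K₂ → K₂ ≤ Ac →
      K₁.relIndex (K₁ ⊔ A) ≤ K₂.relIndex (K₂ ⊔ A)) ∧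
    (Ac.index = 2 → ∀ K : Subgroup G, H ≤ K → K ≤ Ac →
      K.relIndex (K ⊔ A) = 2) := by
  have hA : H ≤ A := hatom.1.le
  have hA_not_le : ¬A ≤ Ac := fun h => hatom.1.ne (by rw [← hmeet, inf_eq_left.2 h])
  refine ⟨fun K₁ K₂ hK₁ h₁₂ hK₂ => ?_, fun hidx K hK hKAc => ?_⟩
  · rw [hbool.relIndex_sup_eq_relIndex_complement hA hAc hmeet hK₁ (h₁₂.trans hK₂),
      hbool.relIndex_sup_eq_relIndex_complement hA hAc hmeet (hK₁.trans h₁₂) hK₂]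
    exact Subgroup.relIndex_le_relIndex_of_le_right (sup_le_sup_right h₁₂ A)
  · rw [hbool.relIndex_sup_eq_relIndex_complement hA hAc hmeet hK hKAc]
    exact Subgroup.relIndex_eq_two_of_index_eq_two hidx fun h => hA_not_le (le_sup_right.trans h)

/-- In a boolean interval `[H,G]` with atom `A` and complement `A^∁`: the index
`|⟨K,A⟩ : K|` is monotone in `K ∈ [H, A^∁]`, and if `|G : A^∁| = 2` then
`|⟨K,A⟩ : K| = 2` for every `K ∈ [H, A^∁]`. -/
theorem relindex_monotone_along_atom {G : Type*} [Group G] [Finite G]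
    (H A Ac : Subgroup G) (hbool : IsBooleanInterval H)
    (hatom : IsMinimalOvergroup H A)
    (hAc : H ≤ Ac) (hmeet : A ⊓ Ac = H) (hjoin : A ⊔ Ac = ⊤) :
    (∀ K₁ K₂ : Subgroup G, H ≤ K₁ → K₁ ≤ K₂ → K₂ ≤ Ac →
      K₁.relIndex (K₁ ⊔ A) ≤ K₂.relIndex (K₂ ⊔ A)) ∧
    (Ac.index = 2 → ∀ K : Subgroup G, H ≤ K → K ≤ Ac →
      K.relIndex (K ⊔ A) = 2) :=
  relindex_monotone_along_atom_general H A Ac hbool hatom hAc hmeet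
end

section
/- Let [H,G] be a boolean interval of finite groups containing subgroups K ⊆ L in [H,G] with |L:K| = 2. Then there exists an atom A of [H,G] such that L = ⟨K, A⟩ and the complement A^∁ of A satisfies |G : A^∁| = 2. -/
/-!
Transport `[H,G]` to the power set of `Fin n`. An edge of index two is a cover, so `L = K ∪ {x}`;
take `A = {x}` and its complement `Aᶜ = {x}ᶜ`, so that every subgroup of the interval lies below
`Aᶜ` or above `A`. For `g ∈ L` the conjugate `g Aᶜ g⁻¹` contains `g K g⁻¹ = K`, and it cannot
contain `A`, since then `g⁻¹ A g ≤ L ⊓ Aᶜ = K`. Hence `L` normalizes `Aᶜ`, and `A ⊔ Aᶜ = G` makes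
`Aᶜ` normal, so `|G : Aᶜ| = |L Aᶜ : Aᶜ| = |L : L ⊓ Aᶜ| = |L : K| = 2`.
-/

theorem isMinimalOvergroup_iff_covBy_s13 {G : Type*} [Group G] {H A : Subgroup G} :
    IsMinimalOvergroup H A ↔ H ⋖ A :=
  and_congr_right fun _ => ⟨fun h X hHX hXA => hXA.ne (h X hHX hXA.le),
    fun h _ hHX hXA => hXA.eq_of_not_lt (h hHX)⟩

namespace Set.Icc

theorem coe_covBy_coe {β : Type*} [PartialOrder β] {a b : β} {x y : Icc a b} :
    (x : β) ⋖ y ↔ x ⋖ y :=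
  OrdConnected.apply_covBy_apply_iff (OrderEmbedding.subtype (· ∈ Icc a b))
    (by rw [OrderEmbedding.coe_subtype, Subtype.range_coe]; exact ordConnected_Icc)

variable {β : Type*} [Lattice β] [OrderTop β] {a : β} {α : Type*} (e : Icc a ⊤ ≃o Set α)

theorem coe_symm_le_coe_symm_iff {s t : Set α} : (e.symm s : β) ≤ e.symm t ↔ s ⊆ t :=
  Subtype.coe_le_coe.trans e.symm.le_iff_le

theorem coe_symm_covBy_coe_symm_iff {s t : Set α} : (e.symm s : β) ⋖ e.symm t ↔ s ⋖ t :=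
  coe_covBy_coe.trans (apply_covBy_apply_iff e.symm)

theorem coe_symm_union (s t : Set α) : (e.symm (s ∪ t) : β) = (e.symm s : β) ⊔ e.symm t :=
  congrArg Subtype.val (e.symm.map_sup s t)

theorem coe_symm_inter (s t : Set α) : (e.symm (s ∩ t) : β) = (e.symm s : β) ⊓ e.symm t :=
  congrArg Subtype.val (e.symm.map_inf s t)

theorem coe_symm_empty : (e.symm ∅ : β) = a :=
  have : Fact (a ≤ ⊤) := ⟨le_top⟩
  congrArg Subtype.val e.symm.map_bot

theorem coe_symm_univ : (e.symm univ : β) = ⊤ :=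
  have : Fact (a ≤ ⊤) := ⟨le_top⟩
  congrArg Subtype.val e.symm.map_top

theorem exists_coe_symm_eq {X : β} (hX : a ≤ X) : ∃ s, (e.symm s : β) = X :=
  ⟨e ⟨X, hX, le_top⟩, by simp⟩

theorem le_coe_symm_compl_or_ge (x : α) {X : β} (hX : a ≤ X) :
    X ≤ e.symm {x}ᶜ ∨ (e.symm {x} : β) ≤ X := by
  obtain ⟨s, rfl⟩ := exists_coe_symm_eq e hX
  simp only [coe_symm_le_coe_symm_iff, subset_compl_singleton_iff, singleton_subset_iff]
  exact (em (x ∈ s)).symm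

end Set.Icc

namespace Subgroup

open scoped Pointwise
open ConjAct

variable {G : Type*} [Group G] {H K L A C : Subgroup G}

theorem covBy_of_relIndex_prime (hKL : K ≤ L) (hp : (K.relIndex L).Prime) : K ⋖ L := by
  refine ⟨hKL.lt_of_ne fun h => by simp [h, Nat.not_prime_one] at hp, fun X hKX hXL => ?_⟩
  have hmul := relIndex_mul_relIndex _ _ _ hKX.le hXL.le
  rcases hp.eq_one_or_self_of_dvd _ (Dvd.intro _ hmul) with h | h
  · exact hKX.not_ge (relIndex_eq_one.mp h)
  · rw [h] at hmul
    exact hXL.not_ge (relIndex_eq_one.mp ((Nat.mul_eq_left hp.ne_zero).1 hmul))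

theorem index_eq_relIndex_inf [C.Normal] (h : L ⊔ C = ⊤) : C.index = (L ⊓ C).relIndex L := by
  rw [← relIndex_top_right, ← h, relIndex_sup_right, inf_comm, inf_relIndex_right]

theorem conjAct_smul_le_of_le_or_ge (hHK : H ≤ K) (hLK : L ≤ normalizer K) (hAL : A ≤ L)
    (hAK : ¬A ≤ K) (hKC : K ≤ C) (hLC : L ⊓ C ≤ K) (hdich : ∀ X, H ≤ X → X ≤ C ∨ A ≤ X)
    {g : G} (hg : g ∈ L) : toConjAct g • C ≤ C := by
  have hgK : toConjAct g • K = K := conjAct_pointwise_smul_eq_self (hLK hg)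
  have hgL : toConjAct g • L = L := conjAct_pointwise_smul_eq_self (le_normalizer hg)
  have hHC : H ≤ toConjAct g • C := hHK.trans (hgK ▸ pointwise_smul_le_pointwise_smul_iff.2 hKC)
  refine (hdich _ hHC).resolve_right fun hA => hAK ?_
  have hAgK : (toConjAct g)⁻¹ • A ≤ K := hLC.trans' <|
    le_inf (subset_pointwise_smul_iff.1 (hgL.symm ▸ hAL)) (subset_pointwise_smul_iff.1 hA)
  exact hgK ▸ subset_pointwise_smul_iff.2 hAgK

theorem le_normalizer_of_le_or_ge (hHK : H ≤ K) (hLK : L ≤ normalizer K) (hAL : A ≤ L)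
    (hAK : ¬A ≤ K) (hKC : K ≤ C) (hLC : L ⊓ C ≤ K) (hdich : ∀ X, H ≤ X → X ≤ C ∨ A ≤ X) :
    L ≤ normalizer C := by
  have hle {g : G} (hg : g ∈ L) := conjAct_smul_le_of_le_or_ge hHK hLK hAL hAK hKC hLC hdich hg
  intro g hg
  refine conjAct_pointwise_smul_iff.1 (le_antisymm (hle hg) (subset_pointwise_smul_iff.2 ?_))
  simpa only [toConjAct_inv] using hle (inv_mem hg)

theorem index_eq_relIndex_of_le_or_ge (hHK : H ≤ K) (hLK : L ≤ normalizer K) (hAL : A ≤ L)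
    (hAK : ¬A ≤ K) (hKC : K ≤ C) (hLC : L ⊓ C = K) (hAC : A ⊔ C = ⊤)
    (hdich : ∀ X, H ≤ X → X ≤ C ∨ A ≤ X) : C.index = K.relIndex L := by
  have hLC_top : L ⊔ C = ⊤ := top_le_iff.1 (hAC ▸ sup_le_sup_right hAL C)
  have hN : L ≤ normalizer C := le_normalizer_of_le_or_ge hHK hLK hAL hAK hKC hLC.le hdich
  have : C.Normal := normalizer_eq_top_iff.1 (top_le_iff.1 (hLC_top ▸ sup_le hN le_normalizer))
  rw [index_eq_relIndex_inf hLC_top, hLC]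

end Subgroup

open Set Set.Icc Subgroup

theorem index_two_edge_gives_atom_general {G : Type*} [Group G]
    (H K L : Subgroup G) (hbool : IsBooleanInterval H)
    (hHK : H ≤ K) (hKL : K ≤ L) (hind : K.relIndex L = 2) :
    ∃ A Ac : Subgroup G, IsMinimalOvergroup H A ∧ L = K ⊔ A ∧
      H ≤ Ac ∧ A ⊓ Ac = H ∧ A ⊔ Ac = ⊤ ∧ Ac.index = 2 := by
  obtain ⟨n, ⟨e⟩⟩ := hbool
  have hLK : L ≤ normalizer K :=
    (normal_subgroupOf_iff_le_normalizer hKL).1 (normal_of_index_eq_two hind)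
  have hcov : K ⋖ L := covBy_of_relIndex_prime hKL (hind ▸ Nat.prime_two)
  obtain ⟨s, rfl⟩ := exists_coe_symm_eq e hHK
  obtain ⟨t, rfl⟩ := exists_coe_symm_eq e (hHK.trans hKL)
  obtain ⟨x, hxs, rfl⟩ := ((coe_symm_covBy_coe_symm_iff e).1 hcov).exists_set_insert
  have hA : H ⋖ e.symm {x} := by
    simpa only [coe_symm_empty] using (coe_symm_covBy_coe_symm_iff e).2 (empty_covBy_singleton x)
  have hL : (e.symm (insert x s) : Subgroup G) = (e.symm s : Subgroup G) ⊔ e.symm {x} := by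
    rw [insert_eq, union_comm, coe_symm_union]
  have hAK : ¬(e.symm {x} : Subgroup G) ≤ e.symm s := by
    rwa [coe_symm_le_coe_symm_iff, singleton_subset_iff]
  have hKC : (e.symm s : Subgroup G) ≤ e.symm {x}ᶜ := by
    rwa [coe_symm_le_coe_symm_iff, subset_compl_singleton_iff]
  have hLC : (e.symm (insert x s) : Subgroup G) ⊓ e.symm {x}ᶜ = e.symm s := by
    rw [← coe_symm_inter, ← sdiff_eq, insert_sdiff_self_of_notMem hxs]
  have hAC : (e.symm {x} : Subgroup G) ⊔ e.symm {x}ᶜ = ⊤ := by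
    rw [← coe_symm_union, union_compl_self, coe_symm_univ]
  refine ⟨e.symm {x}, e.symm {x}ᶜ, isMinimalOvergroup_iff_covBy_s13.2 hA, hL, (e.symm _).2.1,
    by rw [← coe_symm_inter, inter_compl_self, coe_symm_empty], hAC, ?_⟩
  rw [index_eq_relIndex_of_le_or_ge hHK hLK (hL ▸ le_sup_right) hAK hKC hLC hAC
    fun X hX => le_coe_symm_compl_or_ge e x hX, hind]

/-- If a boolean interval `[H,G]` contains an edge `K ⊆ L` of index `|L:K| = 2`,
then there is an atom `A` with `L = ⟨K,A⟩` whose complement `A^∁` satisfies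
`|G : A^∁| = 2`. -/
theorem index_two_edge_gives_atom {G : Type*} [Group G] [Finite G]
    (H K L : Subgroup G) (hbool : IsBooleanInterval H)
    (hHK : H ≤ K) (hKL : K ≤ L) (hind : K.relIndex L = 2) :
    ∃ A Ac : Subgroup G, IsMinimalOvergroup H A ∧ L = K ⊔ A ∧
      H ≤ Ac ∧ A ⊓ Ac = H ∧ A ⊔ Ac = ⊤ ∧ Ac.index = 2 :=
  index_two_edge_gives_atom_general H K L hbool hHK hKL hind
end

section
/- Let [H,G] be a boolean interval of finite groups of rank n whose index |G:H| is a product of exactly n prime numbers (counted with multiplicity), i.e. |G:H| = ∏_i p_i^{r_i} with p_i prime and ∑_i r_i = n. Then for every atom A of [H,G] and every K ∈ [H, A^∁], the index |⟨K, A⟩ : K| is a prime number dividing |G:H|. -/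
open ArithmeticFunction
open scoped ArithmeticFunction.Omega

theorem Set.Icc.isAtom_iff {α : Type*} [PartialOrder α] {a b : α} [Fact (a ≤ b)]
    {x : Set.Icc a b} : IsAtom x ↔ a ⋖ x := by
  rw [← bot_covBy_iff]
  refine (Set.OrdConnected.apply_covBy_apply_iff
    (OrderEmbedding.subtype (· ∈ Set.Icc a b)) ?_).symm
  simpa only [OrderEmbedding.coe_subtype, Subtype.range_coe_subtype] using! Set.ordConnected_Icc

theorem IsMinimalOvergroup.covBy {G : Type*} [Group G] {H A : Subgroup G}
    (hA : IsMinimalOvergroup H A) : H ⋖ A :=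
  ⟨hA.1, fun _ hHK hKA => hKA.ne (hA.2 _ hHK hKA.le)⟩

namespace Subgroup

variable {G : Type*} [Group G] [Finite G]

theorem cardFactors_relIndex_add {P Q R : Subgroup G} (hPQ : P ≤ Q) (hQR : Q ≤ R) :
    Ω (P.relIndex R) = Ω (P.relIndex Q) + Ω (Q.relIndex R) := by
  rw [← relIndex_mul_relIndex P Q R hPQ hQR]
  exact cardFactors_mul index_ne_zero_of_finite index_ne_zero_of_finite

theorem one_le_cardFactors_relIndex {P Q : Subgroup G} (hPQ : P < Q) :
    1 ≤ Ω (P.relIndex Q) :=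
  cardFactors_pos_iff_one_lt.mpr <| Nat.one_lt_iff_ne_zero_and_ne_one.mpr
    ⟨index_ne_zero_of_finite, fun h => hPQ.not_ge (relIndex_eq_one.mp h)⟩

section StrictMono

variable {α : Type*} [Finite α] {φ : Set α → Subgroup G}

theorem ncard_sdiff_le_cardFactors_relIndex (hφ : StrictMono φ) {s t : Set α} (hst : s ⊆ t) :
    (t \ s).ncard ≤ Ω ((φ s).relIndex (φ t)) := by
  obtain ⟨d, hd, rfl⟩ : ∃ d, Disjoint s d ∧ t = s ∪ d :=
    ⟨t \ s, Set.disjoint_sdiff_right, (Set.union_sdiff_cancel hst).symm⟩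
  rw [Set.union_sdiff_cancel_left hd.le_bot]
  clear hst
  induction d, d.toFinite using Set.Finite.induction_on with
  | empty => simp
  | @insert a d ha _ ih =>
    have has : a ∉ s := fun h => hd.ne_of_mem h (Set.mem_insert a d) rfl
    have hstep : s ∪ d ⊂ s ∪ insert a d := by
      rw [Set.union_insert]
      exact Set.ssubset_insert (by simp [has, ha])
    rw [Set.ncard_insert_of_notMem ha, cardFactors_relIndex_add
      (hφ.monotone Set.subset_union_left) (hφ hstep).le]
    exact add_le_add (ih (hd.mono_right (Set.subset_insert a d)))
      (one_le_cardFactors_relIndex (hφ hstep))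

theorem cardFactors_relIndex_eq_ncard_sdiff (hφ : StrictMono φ)
    (htotal : Ω ((φ ∅).relIndex (φ Set.univ)) = Nat.card α) {s t : Set α} (hst : s ⊆ t) :
    Ω ((φ s).relIndex (φ t)) = (t \ s).ncard := by
  have hlow := ncard_sdiff_le_cardFactors_relIndex hφ (Set.empty_subset s)
  have hmid := ncard_sdiff_le_cardFactors_relIndex hφ hst
  have hhigh := ncard_sdiff_le_cardFactors_relIndex hφ (Set.subset_univ t)
  rw [cardFactors_relIndex_add (hφ.monotone (Set.empty_subset s))
      (hφ.monotone (Set.subset_univ s)),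
    cardFactors_relIndex_add (hφ.monotone hst) (hφ.monotone (Set.subset_univ t))] at htotal
  rw [Set.sdiff_empty] at hlow
  rw [Set.ncard_sdiff hst] at hmid ⊢
  rw [Set.ncard_sdiff (Set.subset_univ t), Set.ncard_univ] at hhigh
  have := Set.ncard_le_ncard hst
  have := Set.ncard_le_card t
  omega

end StrictMono

theorem cardFactors_relIndex_eq_ncard_sdiff_of_orderIso {α : Type*} [Finite α] {H : Subgroup G}
    (e : Set.Icc H ⊤ ≃o Set α) (hH : Ω H.index = Nat.card α) {P Q : Set.Icc H ⊤}
    (hPQ : P ≤ Q) : Ω ((P : Subgroup G).relIndex Q) = (e Q \ e P).ncard := by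
  have : Fact (H ≤ ⊤) := ⟨le_top⟩
  let φ : Set α → Subgroup G := fun s => e.symm s
  have hφe : ∀ x, φ (e x) = x := fun x => congrArg Subtype.val (e.symm_apply_apply x)
  have hbot : φ ∅ = H := by
    simp only [φ, ← Set.bot_eq_empty, OrderIso.map_bot, Set.Icc.coe_bot]
  have htop : φ Set.univ = ⊤ := by
    simp only [φ, ← Set.top_eq_univ, OrderIso.map_top, Set.Icc.coe_top]
  have hφ : StrictMono φ := (Subtype.strictMono_coe _).comp e.symm.strictMono
  have h := cardFactors_relIndex_eq_ncard_sdiff hφ (by rwa [hbot, htop, relIndex_top_right])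
    (e.monotone hPQ)
  rwa [hφe, hφe] at h

end Subgroup

/-- If `[H,G]` is boolean of rank `n` and `|G:H|` is a product of exactly `n` primes
(with multiplicity), then for every atom `A`, complement `A^∁`, and
`K ∈ [H, A^∁]`, the index `|⟨K,A⟩ : K|` is a prime dividing `|G:H|`. -/
theorem boolean_prime_product_index {G : Type*} [Group G] [Finite G]
    (H : Subgroup G) (n : ℕ)
    (e : (Set.Icc H (⊤ : Subgroup G)) ≃o Set (Fin n))
    (hfac : H.index.primeFactorsList.length = n) :
    ∀ A Ac : Subgroup G, IsMinimalOvergroup H A → H ≤ Ac → A ⊓ Ac = H → A ⊔ Ac = ⊤ →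
      ∀ K : Subgroup G, H ≤ K → K ≤ Ac →
        (K.relIndex (K ⊔ A)).Prime ∧ K.relIndex (K ⊔ A) ∣ H.index := by
  intro A Ac hA _ hinf _ K hHK hKAc
  have : Fact (H ≤ ⊤) := ⟨le_top⟩
  let k : Set.Icc H ⊤ := ⟨K, hHK, le_top⟩
  let a : Set.Icc H ⊤ := ⟨A, hA.1.le, le_top⟩
  obtain ⟨x, hx⟩ := Set.isAtom_iff.mp ((e.isAtom_iff a).mpr (Set.Icc.isAtom_iff.mpr hA.covBy))
  have hka : k ⊓ a = ⊥ := Subtype.ext <| le_antisymm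
    ((inf_le_inf_right A hKAc).trans (inf_comm A Ac ▸ hinf.le)) (le_inf hHK hA.1.le)
  have hxk : x ∉ e k := fun hxk => by
    simpa [hx, hka] using (e.map_inf k a).symm.le ⟨hxk, hx ▸ rfl⟩
  have hΩ : Ω (K.relIndex (K ⊔ A)) = 1 := by
    have h := Subgroup.cardFactors_relIndex_eq_ncard_sdiff_of_orderIso e
      (by rw [cardFactors_apply, hfac, Nat.card_fin]) (le_sup_left : k ≤ k ⊔ a)
    rwa [e.map_sup, hx, sup_sdiff_left_self,
      (Set.disjoint_singleton_left.mpr hxk).sdiff_eq_left, Set.ncard_singleton] at h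
  exact ⟨cardFactors_eq_one_iff_prime.mp hΩ,
    (Subgroup.relIndex_dvd_index_of_le le_sup_left).trans (Subgroup.index_dvd_of_le hHK)⟩
end

section
/- Let [H,G] be a boolean interval of finite groups of rank n and index |G:H| = p^n with p prime. Then the dual Euler totient satisfies φ̂(H,G) = (p-1)^n > 0. -/
/-!
Every edge `K ⋖ L` of the boolean lattice `[H,G]` has relative index a nontrivial divisor of
`|G:H| = p^n`, hence at least `p`. Along the two halves `H → K → G` of a maximal chain through `K`
this gives `|K:H| ≥ p^ℓ(H,K)` and `|G:K| ≥ p^(n-ℓ(H,K))`; as the product is `p^n`, both are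
equalities. Hence `φ̂(H,G) = ∑_{S ⊆ Fin n} (-1)^|S| p^(n-|S|) = (p-1)^n` by the binomial theorem.
-/

namespace Subgroup

variable {G : Type*} [Group G]

theorem prime_le_relIndex_of_lt {H K L : Subgroup G} {p m : ℕ} (hp : p.Prime)
    (hind : H.index = p ^ m) (hHK : H ≤ K) (hKL : K < L) : p ≤ K.relIndex L := by
  have hdvd : K.relIndex L ∣ p ^ m :=
    hind ▸ (relIndex_dvd_index_of_le hKL.le).trans (index_dvd_of_le hHK)
  obtain ⟨k, -, hk⟩ := (Nat.dvd_prime_pow hp).mp hdvd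
  have hk0 : k ≠ 0 := by
    rintro rfl
    exact hKL.not_ge (relIndex_eq_one.mp (by simpa using hk))
  exact hk ▸ Nat.le_self_pow hk0 p

theorem pow_ncard_le_relIndex_union {α : Type*} {K : Set α → Subgroup G} {p : ℕ}
    (hK : Monotone K) (hstep : ∀ S i, i ∉ S → p ≤ (K S).relIndex (K (insert i S)))
    {D : Set α} (hD : D.Finite) : ∀ S, Disjoint S D → p ^ D.ncard ≤ (K S).relIndex (K (S ∪ D)) := by
  induction D, hD using Set.Finite.induction_on with
  | empty => simp
  | @insert i D hiD hD ih =>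
    intro S hSD
    have hiS : i ∉ S := Set.disjoint_right.mp hSD (Set.mem_insert i D)
    have hunion : insert i S ∪ D = S ∪ insert i D := by
      rw [Set.insert_union, Set.union_insert]
    have hsplit := relIndex_mul_relIndex (K S) (K (insert i S)) (K (S ∪ insert i D))
      (hK (Set.subset_insert i S)) (hunion ▸ hK Set.subset_union_left)
    rw [Set.ncard_insert_of_notMem hiD hD, pow_succ', ← hsplit, ← hunion]
    exact Nat.mul_le_mul (hstep S i hiS)
      (ih _ (Set.disjoint_insert_left.mpr ⟨hiD, (Set.disjoint_insert_right.mp hSD).2⟩))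

end Subgroup

section BooleanInterval

variable {G : Type*} [Group G] {H : Subgroup G} {n p : ℕ}

theorem index_eq_prime_pow_of_orderIso (hp : p.Prime) (e : Set.Icc H ⊤ ≃o Set (Fin n))
    (hind : H.index = p ^ n) (K : Set.Icc H ⊤) : (K : Subgroup G).index = p ^ (n - (e K).ncard) := by
  set F : Set (Fin n) → Subgroup G := fun S ↦ e.symm S
  have hF : StrictMono F := (Subtype.strictMono_coe _).comp e.symm.strictMono
  have hstep : ∀ S i, i ∉ S → p ≤ (F S).relIndex (F (insert i S)) := fun S i hi ↦
    Subgroup.prime_le_relIndex_of_lt hp hind (e.symm S).2.1 (hF (Set.ssubset_insert hi))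
  have hbot : F ∅ = H :=
    le_antisymm (e.symm_apply_le (x := ⟨H, le_rfl, le_top⟩) |>.mpr (Set.empty_subset _))
      (e.symm ∅).2.1
  have htop : F Set.univ = ⊤ :=
    le_antisymm le_top (e.le_symm_apply (x := ⟨⊤, le_top, le_rfl⟩) |>.mpr (Set.subset_univ _))
  have hFK : F (e K) = K := by simp [F]
  have hlow : p ^ (e K).ncard ≤ H.relIndex K := by
    simpa [hbot, hFK] using
      Subgroup.pow_ncard_le_relIndex_union hF.monotone hstep (Set.toFinite (e K)) ∅
        (Set.empty_disjoint _)
  have hup : p ^ (n - (e K).ncard) ≤ (K : Subgroup G).index := by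
    have h := Subgroup.pow_ncard_le_relIndex_union hF.monotone hstep (Set.toFinite (e K)ᶜ) (e K)
      disjoint_compl_right
    rwa [Set.ncard_compl, Nat.card_fin, Set.union_compl_self, htop, hFK,
      Subgroup.relIndex_top_right] at h
  have hcard : (e K).ncard ≤ n := by simpa using (e K).ncard_le_card
  have hprod : H.relIndex K * (K : Subgroup G).index = p ^ (e K).ncard * p ^ (n - (e K).ncard) := by
    rw [Subgroup.relIndex_mul_index K.2.1, hind, ← pow_add, Nat.add_sub_cancel' hcard]
  refine le_antisymm ?_ hup
  exact Nat.le_of_mul_le_mul_left (hprod ▸ Nat.mul_le_mul_right _ hlow) (pow_pos hp.pos _)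

end BooleanInterval

theorem Fintype.sum_set_neg_one_pow_ncard_mul_pow {α R : Type*} [Fintype α] [CommRing R] (x : R) :
    ∑ S : Set α, (-1) ^ S.ncard * x ^ (Fintype.card α - S.ncard) = (x - 1) ^ Fintype.card α := by
  classical
  calc ∑ S : Set α, (-1) ^ S.ncard * x ^ (Fintype.card α - S.ncard)
      = ∑ s : Finset α, (-1) ^ s.card * x ^ (Fintype.card α - s.card) :=
        (Fintype.sum_equiv Fintype.finsetEquivSet _ _ (by simp)).symm
    _ = ∏ _ : α, (x - 1) := by
        rw [Finset.prod_sub (fun _ ↦ x) (fun _ ↦ 1)]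
        simp [Finset.card_univ_sdiff]
    _ = (x - 1) ^ Fintype.card α := Finset.prod_const _

theorem dual_euler_totient_prime_power_general {G : Type*} [Group G]
    (H : Subgroup G) (n p : ℕ) (hp : p.Prime)
    (e : (Set.Icc H (⊤ : Subgroup G)) ≃o Set (Fin n))
    (hind : H.index = p ^ n) :
    dualEulerTotient H e = ((p : ℤ) - 1) ^ n ∧ 0 < dualEulerTotient H e := by
  have heq : dualEulerTotient H e = ((p : ℤ) - 1) ^ n := by
    rw [dualEulerTotient, ← finsum_comp_equiv e.symm.toEquiv, finsum_eq_sum_of_fintype]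
    simpa [index_eq_prime_pow_of_orderIso hp e hind] using
      Fintype.sum_set_neg_one_pow_ncard_mul_pow (α := Fin n) (p : ℤ)
  refine ⟨heq, heq ▸ pow_pos ?_ n⟩
  have := hp.two_le
  omega

/-- A boolean interval of rank `n` and index `p^n` (`p` prime) has dual Euler
totient `(p-1)^n > 0`. -/
theorem dual_euler_totient_prime_power {G : Type*} [Group G] [Finite G]
    (H : Subgroup G) (n p : ℕ) (hp : p.Prime)
    (e : (Set.Icc H (⊤ : Subgroup G)) ≃o Set (Fin n))
    (hind : H.index = p ^ n) :
    dualEulerTotient H e = ((p : ℤ) - 1) ^ n ∧ 0 < dualEulerTotient H e :=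
  dual_euler_totient_prime_power_general H n p hp e hind
end

section
/- Let [H,G] be a boolean interval of finite groups of rank n and index |G:H| = p^{n-1} q, with p, q prime and p ≤ q, and let m be the number of coatoms L ∈ [H,G] with |G:L| = q. Then the dual Euler totient satisfies φ̂(H,G) = (p-1)^n · [1 + ((q-p)/p)·(1 - 1/(1-p)^m)], and in particular φ̂(H,G) ≥ (p-1)^n > 0. -/
open ArithmeticFunction
open scoped ArithmeticFunction.Omega

theorem Subgroup.index_inf_mul_index_sup_le {G : Type*} [Group G] (A B : Subgroup G) :
    (A ⊓ B).index * (A ⊔ B).index ≤ A.index * B.index := by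
  by_cases hB : B.relIndex (A ⊔ B) = 0
  · have hBi : B.index = 0 := by
      rw [← relIndex_mul_index (le_sup_right : B ≤ A ⊔ B), hB, zero_mul]
    have hABi : (A ⊓ B).index = 0 :=
      Nat.eq_zero_of_zero_dvd (hBi ▸ index_dvd_of_le inf_le_right)
    simp [hABi]
  have hinf : (A ⊓ B).index = B.relIndex A * A.index := by
    rw [← relIndex_mul_index (inf_le_left : A ⊓ B ≤ A), inf_comm, inf_relIndex_right]
  calc (A ⊓ B).index * (A ⊔ B).index = B.relIndex A * (A ⊔ B).index * A.index := by
        rw [hinf, mul_right_comm]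
    _ ≤ B.relIndex (A ⊔ B) * (A ⊔ B).index * A.index := by
        gcongr
        exact relIndex_le_of_le_right le_sup_left hB
    _ = A.index * B.index := by rw [relIndex_mul_index le_sup_right, mul_comm]

theorem Nat.mul_eq_pow_cardFactors_mul_of_dvd_pow_mul {p q k d : ℕ} (hp : p.Prime) (hq : q.Prime)
    (hd : d ∣ p ^ k * q) : d * p = p ^ Ω d * if q ∣ d then q else p := by
  -- that is, `d = p ^ (Ω d - 1) * q` or `d = p ^ Ω d`, without truncated subtraction
  split_ifs with hqd
  · obtain ⟨d', rfl⟩ := hqd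
    have hd' : d' ∣ p ^ k := (Nat.mul_dvd_mul_iff_left hq.pos).mp (by rwa [mul_comm _ q] at hd)
    obtain ⟨j, -, rfl⟩ := (Nat.dvd_prime_pow hp).mp hd'
    rw [cardFactors_mul hq.ne_zero (pow_ne_zero _ hp.ne_zero), cardFactors_apply_prime hq,
      cardFactors_apply_prime_pow hp, add_comm, pow_succ]
    ring
  · obtain ⟨j, -, rfl⟩ := (Nat.dvd_prime_pow hp).mp
      ((Nat.Coprime.dvd_mul_right ((Nat.Prime.coprime_iff_not_dvd hq).mpr hqd).symm).mp hd)
    rw [cardFactors_apply_prime_pow hp]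

lemma Subgroup.relIndex_ne_zero_of_finite {G : Type*} [Group G] [Finite G] {A B : Subgroup G} :
    A.relIndex B ≠ 0 :=
  index_ne_zero_of_finite

namespace BooleanInterval

variable {G : Type*} [Group G] {H : Subgroup G} {α : Type*}
  (e : Set.Icc H (⊤ : Subgroup G) ≃o Set α)

def toSubgroup : Set α ↪o Subgroup G :=
  e.symm.toOrderEmbedding.trans (OrderEmbedding.subtype _)

lemma le_toSubgroup (S : Set α) : H ≤ toSubgroup e S := (e.symm S).2.1

lemma toSubgroup_apply {K : Subgroup G} (hK : K ∈ Set.Icc H ⊤) :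
    toSubgroup e (e ⟨K, hK⟩) = K := by
  simp [toSubgroup]

lemma toSubgroup_empty : toSubgroup e ∅ = H := by
  refine le_antisymm ?_ (le_toSubgroup e ∅)
  conv_rhs => rw [← toSubgroup_apply e ⟨le_rfl, le_top⟩]
  exact (toSubgroup e).monotone (Set.empty_subset _)

lemma toSubgroup_univ : toSubgroup e Set.univ = ⊤ :=
  le_antisymm le_top
    (toSubgroup_apply e ⟨le_top, le_rfl⟩ ▸ (toSubgroup e).monotone (Set.subset_univ _))

lemma toSubgroup_inter (S T : Set α) :
    toSubgroup e (S ∩ T) = toSubgroup e S ⊓ toSubgroup e T :=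
  congrArg Subtype.val (e.symm.map_inf S T)

lemma toSubgroup_union (S T : Set α) :
    toSubgroup e (S ∪ T) = toSubgroup e S ⊔ toSubgroup e T :=
  congrArg Subtype.val (e.symm.map_sup S T)

lemma isCoatom_toSubgroup_iff {S : Set α} : IsCoatom (toSubgroup e S) ↔ IsCoatom S := by
  constructor
  · refine fun h ↦ ⟨fun hS ↦ h.1 (hS ▸ toSubgroup_univ e), fun T hST ↦ ?_⟩
    exact (toSubgroup e).injective
      ((h.2 _ ((toSubgroup e).strictMono hST)).trans (toSubgroup_univ e).symm)
  · refine fun h ↦ ⟨fun hS ↦ h.1 ((toSubgroup e).injective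
      (hS.trans (toSubgroup_univ e).symm)), fun X hSX ↦ ?_⟩
    have hHX : X ∈ Set.Icc H ⊤ := ⟨(le_toSubgroup e S).trans hSX.le, le_top⟩
    rw [← toSubgroup_apply e hHX] at hSX ⊢
    rw [h.2 _ ((toSubgroup e).lt_iff_lt.mp hSX)]
    exact toSubgroup_univ e

lemma ncard_coatoms (P : Subgroup G → Prop) :
    {L : Subgroup G | H ≤ L ∧ IsCoatom L ∧ P L}.ncard =
      {i : α | P (toSubgroup e {i}ᶜ)}.ncard := by
  have hcoatoms : {L : Subgroup G | H ≤ L ∧ IsCoatom L ∧ P L} =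
      (toSubgroup e ∘ compl ∘ singleton) '' {i : α | P (toSubgroup e {i}ᶜ)} := by
    ext L
    constructor
    · rintro ⟨hHL, hL, hP⟩
      have hLe := toSubgroup_apply e (⟨hHL, le_top⟩ : L ∈ Set.Icc H ⊤)
      rw [← hLe, isCoatom_toSubgroup_iff, Set.isCoatom_iff] at hL
      obtain ⟨i, hi⟩ := hL
      rw [hi] at hLe
      exact ⟨i, show P _ from hLe ▸ hP, hLe⟩
    · rintro ⟨i, hP, rfl⟩
      exact ⟨le_toSubgroup e _,
        (isCoatom_toSubgroup_iff e).mpr (Set.isCoatom_singleton_compl i), hP⟩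
  rw [hcoatoms, Set.ncard_image_of_injective _
    ((toSubgroup e).injective.comp (compl_injective.comp Set.singleton_injective))]

variable [Finite G]

lemma ncard_sdiff_le_cardFactors_relIndex {S T : Set α} (hST : S ⊆ T) :
    (T \ S).ncard ≤ Ω ((toSubgroup e S).relIndex (toSubgroup e T)) := by
  induction h : (T \ S).ncard generalizing S with
  | zero => exact Nat.zero_le _
  | succ k ih =>
    obtain ⟨i, hiT, hiS⟩ := Set.nonempty_of_ncard_ne_zero (by omega : (T \ S).ncard ≠ 0)
    have hS' : insert i S ⊆ T := Set.insert_subset hiT hST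
    have hcard : (T \ insert i S).ncard = k := by
      rw [← Set.union_singleton, ← Set.sdiff_sdiff,
        Set.ncard_sdiff_singleton_of_mem (Set.mem_sdiff_of_mem hiT hiS), h, Nat.add_sub_cancel]
    have hstep : 1 ≤ Ω ((toSubgroup e S).relIndex (toSubgroup e (insert i S))) := by
      refine cardFactors_pos_iff_one_lt.mpr (lt_of_le_of_ne (Nat.pos_of_ne_zero
        Subgroup.relIndex_ne_zero_of_finite) (Ne.symm ?_))
      rw [Ne, Subgroup.relIndex_eq_one, (toSubgroup e).le_iff_le]
      exact fun h ↦ hiS (h (Set.mem_insert i S))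
    rw [← Subgroup.relIndex_mul_relIndex _ _ _ ((toSubgroup e).monotone (Set.subset_insert i S))
      ((toSubgroup e).monotone hS'), cardFactors_mul Subgroup.relIndex_ne_zero_of_finite
      Subgroup.relIndex_ne_zero_of_finite]
    linarith [ih hS' hcard]

lemma cardFactors_index_toSubgroup [Finite α] (hH : Ω H.index = Nat.card α) (S : Set α) :
    Ω (toSubgroup e S).index = Sᶜ.ncard := by
  have hle := ncard_sdiff_le_cardFactors_relIndex e (Set.empty_subset S)
  have hge := ncard_sdiff_le_cardFactors_relIndex e (Set.subset_univ S)
  rw [toSubgroup_empty, Set.sdiff_empty] at hle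
  rw [toSubgroup_univ, Subgroup.relIndex_top_right, ← Set.compl_eq_univ_sdiff] at hge
  have hsum : Ω (H.relIndex (toSubgroup e S)) + Ω (toSubgroup e S).index = Nat.card α := by
    rw [← cardFactors_mul Subgroup.relIndex_ne_zero_of_finite Subgroup.index_ne_zero_of_finite,
      Subgroup.relIndex_mul_index (le_toSubgroup e S), hH]
  have := Set.ncard_add_ncard_compl S
  omega

lemma index_toSubgroup_mul_prime_eq_ite_dvd [Finite α] {p q : ℕ} (hp : p.Prime) (hq : q.Prime)
    (hind : H.index = p ^ (Nat.card α - 1) * q) (S : Set α) :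
    (toSubgroup e S).index * p =
      p ^ Sᶜ.ncard * if q ∣ (toSubgroup e S).index then q else p := by
  have hα : Nat.card α ≠ 0 := by
    intro h0
    have : IsEmpty α := Finite.card_eq_zero_iff.mp h0
    rw [← toSubgroup_empty e, ← Set.univ_eq_empty_iff.mpr ‹_›, toSubgroup_univ,
      Subgroup.index_top, h0, pow_zero, one_mul] at hind
    exact hq.one_lt.ne hind
  have hΩ : Ω H.index = Nat.card α := by
    rw [hind, cardFactors_mul (pow_ne_zero _ hp.ne_zero) hq.ne_zero,
      cardFactors_apply_prime_pow hp, cardFactors_apply_prime hq]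
    omega
  rw [← cardFactors_index_toSubgroup e hΩ S]
  exact Nat.mul_eq_pow_cardFactors_mul_of_dvd_pow_mul hp hq
    (hind ▸ Subgroup.index_dvd_of_le (le_toSubgroup e S))

lemma not_dvd_index_toSubgroup_inter [Finite α] {p q : ℕ} (hp : p.Prime) (hq : q.Prime)
    (hpq : p < q) (hind : H.index = p ^ (Nat.card α - 1) * q) {S T : Set α}
    (hS : ¬ q ∣ (toSubgroup e S).index) (hT : ¬ q ∣ (toSubgroup e T).index) :
    ¬ q ∣ (toSubgroup e (S ∩ T)).index := by
  -- With `|G:K_X| p = p^{|Xᶜ|} c_X` and `c_X ∈ {p, q}`, submodularity of the index gives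
  -- `c_{S∩T} c_{S∪T} ≤ c_S c_T = p²`, so `c_{S∩T} = p`.
  intro hST
  have hindex := index_toSubgroup_mul_prime_eq_ite_dvd e hp hq hind
  set c := if q ∣ (toSubgroup e (S ∪ T)).index then q else p with hc_def
  have hc : p ≤ c := by rw [hc_def]; split_ifs <;> omega
  have hcard : (S ∩ T)ᶜ.ncard + (S ∪ T)ᶜ.ncard = Sᶜ.ncard + Tᶜ.ncard := by
    rw [Set.compl_inter, Set.compl_union, Set.ncard_union_add_ncard_inter]
  have hsub := Subgroup.index_inf_mul_index_sup_le (toSubgroup e S) (toSubgroup e T)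
  rw [← toSubgroup_inter, ← toSubgroup_union] at hsub
  have key : p ^ (Sᶜ.ncard + Tᶜ.ncard) * (q * c) ≤ p ^ (Sᶜ.ncard + Tᶜ.ncard) * (p * p) :=
    calc p ^ (Sᶜ.ncard + Tᶜ.ncard) * (q * c)
        = (toSubgroup e (S ∩ T)).index * p * ((toSubgroup e (S ∪ T)).index * p) := by
          rw [hindex, hindex, if_pos hST, ← hcard]; ring
      _ ≤ (toSubgroup e S).index * p * ((toSubgroup e T).index * p) := by
          rw [mul_mul_mul_comm, mul_mul_mul_comm _ p]; exact Nat.mul_le_mul_right _ hsub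
      _ = p ^ (Sᶜ.ncard + Tᶜ.ncard) * (p * p) := by
          rw [hindex, hindex, if_neg hS, if_neg hT]; ring
  exact (Nat.le_of_mul_le_mul_left key (pow_pos hp.pos _)).not_gt
    (Nat.mul_lt_mul_of_lt_of_le hpq hc (hp.pos.trans_le hc))

lemma exists_forall_not_dvd_index_toSubgroup_iff [Finite α] {p q : ℕ} (hp : p.Prime)
    (hq : q.Prime) (hpq : p < q) (hind : H.index = p ^ (Nat.card α - 1) * q) :
    ∃ M : Set α, ∀ S, ¬ q ∣ (toSubgroup e S).index ↔ M ⊆ S := by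
  let F : Filter α :=
    { sets := {S | ¬ q ∣ (toSubgroup e S).index}
      univ_sets := by simpa [toSubgroup_univ] using hq.one_lt.ne'
      sets_of_superset := fun hS hST hT ↦
        hS (hT.trans (Subgroup.index_dvd_of_le ((toSubgroup e).monotone hST)))
      inter_sets := not_dvd_index_toSubgroup_inter e hp hq hpq hind }
  obtain ⟨M, hM⟩ := Filter.eq_principal_of_finite F
  exact ⟨M, fun S ↦ by rw [← Filter.mem_principal, ← hM]; rfl⟩

open scoped Classical in
theorem index_toSubgroup_mul_prime_eq_ite_subset [Finite α] {p q : ℕ} (hp : p.Prime)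
    (hq : q.Prime) (hpq : p ≤ q) (hind : H.index = p ^ (Nat.card α - 1) * q) (S : Set α) :
    (toSubgroup e S).index * p =
      p ^ Sᶜ.ncard * if {i | (toSubgroup e {i}ᶜ).index = q} ⊆ S then p else q := by
  rw [index_toSubgroup_mul_prime_eq_ite_dvd e hp hq hind S]
  rcases hpq.eq_or_lt with rfl | hlt
  · simp
  obtain ⟨M, hM⟩ := exists_forall_not_dvd_index_toSubgroup_iff e hp hq hlt hind
  have hcoatoms : {i | (toSubgroup e {i}ᶜ).index = q} = M := by
    ext i
    have h := index_toSubgroup_mul_prime_eq_ite_dvd e hp hq hind {i}ᶜ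
    rw [compl_compl, Set.ncard_singleton, pow_one, mul_comm p] at h
    rw [Set.mem_ofPred_eq, ← not_iff_not, ← Set.subset_compl_singleton_iff, ← hM]
    split_ifs at h with hdvd
    · simpa [hdvd] using Nat.eq_of_mul_eq_mul_right hp.pos h
    · rw [Nat.eq_of_mul_eq_mul_right hp.pos h] at hdvd ⊢
      simpa [hdvd] using hlt.ne
  simp only [hcoatoms, ← hM, ite_not]

lemma cast_index_toSubgroup_coe_finset [Fintype α] [DecidableEq α] {p q : ℕ} (hp : p.Prime)
    (hq : q.Prime) (hpq : p ≤ q) (hind : H.index = p ^ (Nat.card α - 1) * q) (t : Finset α) :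
    ((toSubgroup e t).index : ℚ) = q / p * ∏ _i ∈ tᶜ, (p : ℚ) +
      (1 - q / p) * ∏ i ∈ tᶜ, if (toSubgroup e {i}ᶜ).index ≠ q then (p : ℚ) else 0 := by
  classical
  have h := index_toSubgroup_mul_prime_eq_ite_subset e hp hq hpq hind t
  rw [← Finset.coe_compl, Set.ncard_coe_finset] at h
  set M := {i | (toSubgroup e {i}ᶜ).index = q}
  have hMt : (∀ i ∈ tᶜ, (toSubgroup e {i}ᶜ).index ≠ q) ↔ M ⊆ t := by
    simp only [Finset.mem_compl]
    exact ⟨fun h i hi ↦ by_contra (h i · hi), fun h i hi hiM ↦ hi (h hiM)⟩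
  have hp0 : (p : ℚ) ≠ 0 := by exact_mod_cast hp.ne_zero
  have hQ : ((toSubgroup e t).index : ℚ) * p =
      p ^ tᶜ.card * if M ⊆ t then (p : ℚ) else q := by
    exact_mod_cast h.trans (by split_ifs <;> rfl)
  simp only [Finset.prod_ite_zero, Finset.prod_const, hMt]
  split_ifs at hQ ⊢
  · field_simp; linear_combination hQ
  · field_simp; linear_combination hQ

end BooleanInterval

theorem Finset.sum_neg_one_pow_card_mul_prod_compl {ι R : Type*} [Fintype ι] [DecidableEq ι]
    [CommRing R] (f : ι → R) :
    ∑ t : Finset ι, (-1) ^ t.card * ∏ i ∈ tᶜ, f i = ∏ i, (f i - 1) := by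
  simp [Finset.prod_sub, Finset.compl_eq_univ_sdiff]

lemma dualEulerTotient_eq_sum {G : Type*} [Group G] (H : Subgroup G) {n : ℕ}
    (e : Set.Icc H (⊤ : Subgroup G) ≃o Set (Fin n)) :
    dualEulerTotient H e =
      ∑ t : Finset (Fin n), (-1) ^ t.card * ((BooleanInterval.toSubgroup e t).index : ℤ) := by
  rw [dualEulerTotient, ← finsum_comp_equiv (Fintype.finsetEquivSet.trans e.symm.toEquiv),
    finsum_eq_sum_of_fintype]
  simp [BooleanInterval.toSubgroup]

open BooleanInterval in
theorem dualEulerTotient_eq_of_index_eq_prime_pow_mul_prime {G : Type*} [Group G] [Finite G]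
    {H : Subgroup G} {n p q m : ℕ} (hp : p.Prime) (hq : q.Prime) (hpq : p ≤ q)
    (e : Set.Icc H (⊤ : Subgroup G) ≃o Set (Fin n)) (hind : H.index = p ^ (n - 1) * q)
    (hm : m = {L : Subgroup G | H ≤ L ∧ IsCoatom L ∧ L.index = q}.ncard) :
    (dualEulerTotient H e : ℚ) =
      q / p * (p - 1) ^ n + (1 - q / p) * ((-1) ^ m * (p - 1) ^ (n - m)) := by
  classical
  rw [ncard_coatoms e, Set.ncard_eq_toFinset_card', Set.toFinset_ofPred] at hm
  have hout : (Finset.univ.filter fun i ↦ (toSubgroup e {i}ᶜ).index ≠ q).card = n - m := by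
    rw [Finset.filter_not, Finset.card_sdiff_of_subset (Finset.filter_subset _ _), ← hm]
    simp
  have hind' : H.index = p ^ (Nat.card (Fin n) - 1) * q := by simpa using hind
  rw [dualEulerTotient_eq_sum]
  push_cast
  simp only [cast_index_toSubgroup_coe_finset e hp hq hpq hind', mul_add, Finset.sum_add_distrib,
    mul_left_comm _ (q / p : ℚ), mul_left_comm _ (1 - q / p : ℚ), ← Finset.mul_sum,
    Finset.sum_neg_one_pow_card_mul_prod_compl]
  simp only [ite_sub, zero_sub, Finset.prod_ite, Finset.prod_const, Finset.card_univ,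
    Fintype.card_fin, hout, not_not, ← hm]
  ring

theorem div_mul_pow_add_one_sub_div_mul_eq {K : Type*} [Field K] {p q : K} (hp : p ≠ 0)
    (hp1 : p ≠ 1) {m n : ℕ} (hmn : m ≤ n) :
    q / p * (p - 1) ^ n + (1 - q / p) * ((-1) ^ m * (p - 1) ^ (n - m)) =
      (p - 1) ^ n * (1 + (q - p) / p * (1 - 1 / (1 - p) ^ m)) := by
  obtain ⟨k, rfl⟩ := Nat.exists_eq_add_of_le hmn
  have hsq : ((-1 : K) ^ m) * (-1) ^ m = 1 := by rw [← mul_pow]; norm_num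
  have h1p : (1 - p) ^ m = (-1) ^ m * (p - 1) ^ m := by rw [← mul_pow]; ring
  have : p - 1 ≠ 0 := sub_ne_zero.mpr hp1
  rw [Nat.add_sub_cancel_left, h1p, pow_add]
  field_simp
  linear_combination (p - q) * hsq

theorem pow_le_div_mul_pow_add_one_sub_div_mul {K : Type*} [Field K] [LinearOrder K]
    [IsStrictOrderedRing K] {p q : K} (hp : 2 ≤ p) (hpq : p ≤ q) (m n : ℕ) :
    (p - 1) ^ n ≤ q / p * (p - 1) ^ n + (1 - q / p) * ((-1) ^ m * (p - 1) ^ (n - m)) := by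
  have hqp : 1 ≤ q / p := (one_le_div (by linarith)).mpr hpq
  have hmono : (p - 1) ^ (n - m) ≤ (p - 1) ^ n :=
    pow_le_pow_right₀ (by linarith) (Nat.sub_le n m)
  have hsign : (-1) ^ m * (p - 1) ^ (n - m) ≤ (p - 1) ^ (n - m) := by
    have := pow_nonneg (by linarith : (0 : K) ≤ p - 1) (n - m)
    rcases neg_one_pow_eq_or K m with h | h <;> rw [h] <;> linarith
  nlinarith

/-- A boolean interval of rank `n` and index `p^{n-1} q` (`p ≤ q` primes), with `m`
coatoms of index `q`, has dual Euler totient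
`(p-1)^n · [1 + ((q-p)/p)(1 - 1/(1-p)^m)] ≥ (p-1)^n > 0`. -/
theorem dual_euler_totient_p_pow_q {G : Type*} [Group G] [Finite G]
    (H : Subgroup G) (n p q m : ℕ) (hp : p.Prime) (hq : q.Prime) (hpq : p ≤ q)
    (e : (Set.Icc H (⊤ : Subgroup G)) ≃o Set (Fin n))
    (hind : H.index = p ^ (n - 1) * q)
    (hm : m = {L : Subgroup G | H ≤ L ∧ IsCoatom L ∧ L.index = q}.ncard) :
    (dualEulerTotient H e : ℚ) =
      ((p : ℚ) - 1) ^ n * (1 + (((q : ℚ) - p) / p) * (1 - 1 / (1 - (p : ℚ)) ^ m)) ∧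
    ((p : ℤ) - 1) ^ n ≤ dualEulerTotient H e ∧ 0 < dualEulerTotient H e := by
  have hφ := dualEulerTotient_eq_of_index_eq_prime_pow_mul_prime hp hq hpq e hind hm
  have hmn : m ≤ n := by
    simpa [hm, BooleanInterval.ncard_coatoms e] using
      Set.ncard_le_card {i : Fin n | (BooleanInterval.toSubgroup e {i}ᶜ).index = q}
  have hp2 : (2 : ℚ) ≤ p := by exact_mod_cast hp.two_le
  have hle : ((p : ℚ) - 1) ^ n ≤ dualEulerTotient H e :=
    hφ ▸ pow_le_div_mul_pow_add_one_sub_div_mul hp2 (by exact_mod_cast hpq) m n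
  have hpos : (0 : ℤ) < (p - 1) ^ n := pow_pos (by linarith [hp.two_le]) n
  refine ⟨?_, by exact_mod_cast hle, hpos.trans_le (by exact_mod_cast hle)⟩
  rw [hφ, div_mul_pow_add_one_sub_div_mul_eq (by linarith) (by linarith) hmn]
end
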